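/- arXiv:2507.02102 — 11 statements merged into one kernel-verified Lean document; each statement's English description precedes it below -/
import Mathlib

section
/- Let X be a compact metric space and F a closed relation on X. Then F is CR-turbulent if and only if there exists a natural number n ≥ 2 such that the dynamical system (X_F^+, (σ_F^+)^{n-1}) is separated turbulent. -/
open Set

/-- The n-th Mahavier product of a relation `F` on `X`: tuples `(x 0, …, x n)`
with `(x i, x (i+1)) ∈ F` for all `i < n`. -/
def Mahavier {X : Type*} (F : Set (X × X)) (n : ℕ) : Set (Fin (n + 1) → X) :=
  {x | ∀ i : Fin n, (x i.castSucc, x i.succ) ∈ F}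

/-- A witness of CR-turbulence at length parameter `n`. -/
def CRWitness {X : Type*} [TopologicalSpace X] (F : Set (X × X)) (n : ℕ) : Prop :=
  ∃ K L : Set (Fin (n + 1) → X),
    K.Nonempty ∧ L.Nonempty ∧ IsClosed K ∧ IsClosed L ∧
    K ⊆ Mahavier F n ∧ L ⊆ Mahavier F n ∧ Disjoint K L ∧
    ((fun x => x 0) '' K ∪ (fun x => x 0) '' L) ⊆
      ((fun x => x (Fin.last n)) '' K ∩ (fun x => x (Fin.last n)) '' L)

/-- A witness of reverse CR-turbulence at length parameter `n`. -/
def RevCRWitness {X : Type*} [TopologicalSpace X] (F : Set (X × X)) (n : ℕ) : Prop :=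
  ∃ K L : Set (Fin (n + 1) → X),
    K.Nonempty ∧ L.Nonempty ∧ IsClosed K ∧ IsClosed L ∧
    K ⊆ Mahavier F n ∧ L ⊆ Mahavier F n ∧ Disjoint K L ∧
    ((fun x => x (Fin.last n)) '' K ∪ (fun x => x (Fin.last n)) '' L) ⊆
      ((fun x => x 0) '' K ∩ (fun x => x 0) '' L)

/-- `F` is CR-turbulent. -/
def CRTurbulent {X : Type*} [TopologicalSpace X] (F : Set (X × X)) : Prop :=
  ∃ n : ℕ, 1 ≤ n ∧ CRWitness F n

/-- `F` is reverse CR-turbulent. -/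
def RevCRTurbulent {X : Type*} [TopologicalSpace X] (F : Set (X × X)) : Prop :=
  ∃ n : ℕ, 1 ≤ n ∧ RevCRWitness F n

/-- A self-map is separated turbulent. -/
def SepTurbulent {Z : Type*} [TopologicalSpace Z] (h : Z → Z) : Prop :=
  ∃ K L : Set Z, K.Nonempty ∧ L.Nonempty ∧ IsClosed K ∧ IsClosed L ∧
    Disjoint K L ∧ K ∪ L ⊆ h '' K ∩ h '' L

/-- A self-map is turbulent. -/
def Turbulent {Z : Type*} [TopologicalSpace Z] (h : Z → Z) : Prop :=
  ∃ K L : Set Z, K.Nonempty ∧ L.Nonempty ∧ IsClosed K ∧ IsClosed L ∧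
    (K ∩ L).Subsingleton ∧ K ∪ L ⊆ h '' K ∩ h '' L

/-- The infinite Mahavier product `X_F^+`. -/
def MahavierSeq {X : Type*} (F : Set (X × X)) : Set (ℕ → X) :=
  {x | ∀ i : ℕ, (x i, x (i + 1)) ∈ F}

/-- The shift map `σ_F^+` on `X_F^+`. -/
def shiftMap {X : Type*} (F : Set (X × X)) : MahavierSeq F → MahavierSeq F :=
  fun x => ⟨fun n => x.1 (n + 1), fun i => x.2 (i + 1)⟩

/-!
A CR-turbulent pair `K, L ⊆ X_F^n` is turned into a separated turbulent pair for `(σ_F^+)^n` by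
taking the sequences that are concatenations of blocks from `K ∪ L`, starting with a block of `K`
(resp. `L`); such infinite concatenations exist by compactness of `X^ℕ`, since every block has a
predecessor in `K` and in `L`. Conversely, a separated turbulent pair for `(σ_F^+)^m` is also one
for every power `(σ_F^+)^(m k)`, `k ≥ 1`; compactness yields a length `N` beyond which the
truncations `(x_1, …, x_{N+1})` of the two sets are disjoint, and for `N` a multiple of `m`
these truncations form a CR-turbulent pair in `X_F^N`.
-/

open Set

theorem subset_image_iterate_succ {Z : Type*} {f : Z → Z} {A S : Set Z} (hS : S ⊆ f '' A)
    (hA : A ⊆ S) (k : ℕ) : S ⊆ f^[k + 1] '' A := by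
  induction k with
  | zero => simpa using hS
  | succ k ih =>
    rw [Function.iterate_succ', image_comp]
    exact hS.trans (image_mono (hA.trans ih))

section Sequences

variable {X : Type*}

def seqTrunc (n : ℕ) (x : ℕ → X) : Fin (n + 1) → X := fun i => x i

def seqBlock (n j : ℕ) (x : ℕ → X) : Fin (n + 1) → X := fun i => x (j * n + i)

/-- The last entry of `c` is dropped: it is meant to coincide with `x 0`. -/
def prependBlock {n : ℕ} (c : Fin (n + 1) → X) (x : ℕ → X) : ℕ → X :=
  fun i => if h : i < n then c ⟨i, by omega⟩ else x (i - n)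

def blockChains (n : ℕ) (B : Set (Fin (n + 1) → X)) : Set (ℕ → X) :=
  {x | ∀ j, seqBlock n j x ∈ B}

@[simp]
theorem seqBlock_apply (n j : ℕ) (x : ℕ → X) (i : Fin (n + 1)) :
    seqBlock n j x i = x (j * n + i) := rfl

theorem prependBlock_add {n : ℕ} (c : Fin (n + 1) → X) (x : ℕ → X) (i : ℕ) :
    prependBlock c x (i + n) = x i := by
  simp [prependBlock]

theorem seqBlock_zero_prependBlock {n : ℕ} {c : Fin (n + 1) → X} {x : ℕ → X}
    (hcx : c (Fin.last n) = x 0) : seqBlock n 0 (prependBlock c x) = c := by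
  funext i
  rcases (Fin.le_last i).lt_or_eq with hi | rfl
  · simp [prependBlock, show (i : ℕ) < n from hi]
  · simpa [prependBlock] using hcx.symm

theorem seqBlock_succ_prependBlock {n : ℕ} (c : Fin (n + 1) → X) (x : ℕ → X) (j : ℕ) :
    seqBlock n (j + 1) (prependBlock c x) = seqBlock n j x := by
  funext i
  simpa [add_mul, add_right_comm] using prependBlock_add c x (j * n + i)

theorem prependBlock_mem_blockChains {n : ℕ} {B : Set (Fin (n + 1) → X)} {c : Fin (n + 1) → X}
    {x : ℕ → X} (hc : c ∈ B) (hx : x ∈ blockChains n B) (hcx : c (Fin.last n) = x 0) :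
    prependBlock c x ∈ blockChains n B
  | 0 => by rwa [seqBlock_zero_prependBlock hcx]
  | j + 1 => by rw [seqBlock_succ_prependBlock]; exact hx j

theorem blockChains_subset_mahavierSeq {F : Set (X × X)} {n : ℕ} (hn : 1 ≤ n)
    {B : Set (Fin (n + 1) → X)} (hB : B ⊆ Mahavier F n) : blockChains n B ⊆ MahavierSeq F := by
  intro x hx i
  have hmod : i % n < n := Nat.mod_lt _ hn
  simpa [Fin.succ, ← add_assoc, Nat.div_add_mod'] using hB (hx (i / n)) ⟨i % n, hmod⟩

theorem seqTrunc_mem_mahavier {F : Set (X × X)} {x : ℕ → X} (hx : x ∈ MahavierSeq F) (n : ℕ) :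
    seqTrunc n x ∈ Mahavier F n :=
  fun i => hx i

variable [TopologicalSpace X]

theorem continuous_seqTrunc (n : ℕ) : Continuous (seqTrunc n : (ℕ → X) → Fin (n + 1) → X) :=
  continuous_pi fun _ => continuous_apply _

theorem continuous_seqBlock (n j : ℕ) : Continuous (seqBlock n j : (ℕ → X) → Fin (n + 1) → X) :=
  continuous_pi fun _ => continuous_apply _

theorem isClosed_blockChains (n : ℕ) {B : Set (Fin (n + 1) → X)} (hB : IsClosed B) :
    IsClosed (blockChains n B) := by
  rw [blockChains, ofPred_forall]
  exact isClosed_iInter fun j => hB.preimage (continuous_seqBlock n j)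

/-- König's lemma in compact form: finite chains are built backwards by prepending, and
compactness of `X^ℕ` passes to an infinite one. -/
theorem blockChains_nonempty [CompactSpace X] {n : ℕ} {A : Set (Fin (n + 1) → X)}
    (hA : IsClosed A) (hne : A.Nonempty) (hpred : ∀ y ∈ A, ∃ c ∈ A, c (Fin.last n) = y 0) :
    (blockChains n A).Nonempty := by
  let S : ℕ → Set (ℕ → X) := fun m => ⋂ j ≤ m, seqBlock n j ⁻¹' A
  have hS : ∀ m, (S m).Nonempty := by
    intro m
    induction m with
    | zero =>
      obtain ⟨a, ha⟩ := hne
      refine ⟨prependBlock a fun _ => a (Fin.last n), mem_iInter₂.2 fun j hj => ?_⟩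
      rw [Nat.le_zero.1 hj, mem_preimage, seqBlock_zero_prependBlock rfl]
      exact ha
    | succ m ih =>
      obtain ⟨x, hx⟩ := ih
      rw [mem_iInter₂] at hx
      obtain ⟨c, hc, hcx⟩ := hpred _ (hx 0 m.zero_le)
      refine ⟨prependBlock c x, mem_iInter₂.2 fun j hj => ?_⟩
      cases j with
      | zero => rwa [mem_preimage, seqBlock_zero_prependBlock (by simpa using hcx)]
      | succ j => rw [mem_preimage, seqBlock_succ_prependBlock]; exact hx j (by omega)
  have hS_closed : ∀ m, IsClosed (S m) := fun m =>
    isClosed_biInter fun j _ => hA.preimage (continuous_seqBlock n j)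
  have hS_iInter : ⋂ m, S m = blockChains n A := by
    ext x
    simp only [S, blockChains, mem_iInter, mem_preimage, mem_ofPred_eq]
    exact ⟨fun h j => h j j le_rfl, fun h _ j _ => h j⟩
  rw [← hS_iInter]
  exact IsCompact.nonempty_iInter_of_sequence_nonempty_isCompact_isClosed S
    (fun m _ hx => mem_iInter₂.2 fun j hj => mem_iInter₂.1 hx j (by omega)) hS
    (hS_closed 0).isCompact hS_closed

theorem exists_seqTrunc_image_disjoint [T2Space X] {K L : Set (ℕ → X)} (hK : IsCompact K)
    (hL : IsCompact L) (hKL : Disjoint K L) :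
    ∃ M, ∀ N, M ≤ N → Disjoint (seqTrunc N '' K) (seqTrunc N '' L) := by
  let U : ℕ → Set ((ℕ → X) × (ℕ → X)) := fun M => ⋃ i ≤ M, {p | p.1 i ≠ p.2 i}
  have hU_open : ∀ M, IsOpen (U M) := fun M => isOpen_biUnion fun i _ =>
    isOpen_ne_fun ((continuous_apply i).comp continuous_fst)
      ((continuous_apply i).comp continuous_snd)
  have hU_mono : Monotone U := fun M M' hM =>
    biUnion_subset_biUnion_left fun i (hi : i ≤ M) => (show i ≤ M' by omega)
  have hcover : K ×ˢ L ⊆ ⋃ M, U M := by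
    rintro ⟨x, y⟩ ⟨hx, hy⟩
    obtain ⟨i, hi⟩ := Function.ne_iff.1 (hKL.ne_of_mem hx hy)
    exact mem_iUnion.2 ⟨i, mem_iUnion₂.2 ⟨i, le_rfl, hi⟩⟩
  obtain ⟨M, hM⟩ := (hK.prod hL).elim_directed_cover U hU_open hcover hU_mono.directed_le
  refine ⟨M, fun N hN => disjoint_left.2 ?_⟩
  rintro _ ⟨x, hx, rfl⟩ ⟨y, hy, hxy⟩
  obtain ⟨i, hi, hne⟩ := mem_iUnion₂.1 (hM (mk_mem_prod hx hy))
  exact hne (congrFun hxy ⟨i, by omega⟩).symm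

end Sequences

section Shift

variable {X : Type*} {F : Set (X × X)}

theorem shiftMap_iterate_apply (k : ℕ) (x : MahavierSeq F) (i : ℕ) :
    ((shiftMap F)^[k] x).1 i = x.1 (i + k) := by
  induction k generalizing x with
  | zero => rfl
  | succ k ih => rw [Function.iterate_succ_apply, ih]; rfl

theorem mem_image_shiftMap_iterate {k : ℕ} {S : Set (ℕ → X)} {x : MahavierSeq F} {y : ℕ → X}
    (hyS : y ∈ S) (hy : y ∈ MahavierSeq F) (hyx : ∀ i, y (i + k) = x.1 i) :
    x ∈ (shiftMap F)^[k] '' (Subtype.val ⁻¹' S) :=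
  ⟨⟨y, hy⟩, hyS, Subtype.ext <| funext fun i => (shiftMap_iterate_apply k _ i).trans (hyx i)⟩

section BlockChains

variable {n : ℕ} {A B : Set (Fin (n + 1) → X)}

theorem subset_shiftMap_iterate_image_blockChains (hn : 1 ≤ n) (hB : B ⊆ Mahavier F n)
    (hAB : A ⊆ B) (hpred : ∀ y ∈ B, ∃ c ∈ A, c (Fin.last n) = y 0) :
    Subtype.val ⁻¹' blockChains n B ⊆
      (shiftMap F)^[n] '' (Subtype.val ⁻¹' (seqBlock n 0 ⁻¹' A ∩ blockChains n B)) := by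
  intro x hx
  obtain ⟨c, hc, hcx⟩ := hpred _ (hx 0)
  have hcx : c (Fin.last n) = x.1 0 := by simpa using hcx
  have hy := prependBlock_mem_blockChains (hAB hc) hx hcx
  refine mem_image_shiftMap_iterate ⟨?_, hy⟩ (blockChains_subset_mahavierSeq hn hB hy)
    (prependBlock_add c x.1)
  rwa [mem_preimage, seqBlock_zero_prependBlock hcx]

variable [TopologicalSpace X]

theorem nonempty_blockChains_starting_in [CompactSpace X] (hn : 1 ≤ n)
    (hB : B ⊆ Mahavier F n) (hAB : A ⊆ B) (hA : IsClosed A) (hAne : A.Nonempty)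
    (hpred : ∀ y ∈ B, ∃ c ∈ A, c (Fin.last n) = y 0) :
    (Subtype.val ⁻¹' (seqBlock n 0 ⁻¹' A ∩ blockChains n B) : Set (MahavierSeq F)).Nonempty := by
  obtain ⟨x, hx⟩ := blockChains_nonempty hA hAne fun y hy => hpred y (hAB hy)
  have hxB : x ∈ blockChains n B := fun j => hAB (hx j)
  exact ⟨⟨x, blockChains_subset_mahavierSeq hn hB hxB⟩, hx 0, hxB⟩

theorem isClosed_blockChains_starting_in (hA : IsClosed A) (hB : IsClosed B) :
    IsClosed (Subtype.val ⁻¹' (seqBlock n 0 ⁻¹' A ∩ blockChains n B) : Set (MahavierSeq F)) :=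
  ((hA.preimage (continuous_seqBlock n 0)).inter (isClosed_blockChains n hB)).preimage
    continuous_subtype_val

end BlockChains

variable [TopologicalSpace X]

theorem isClosed_mahavierSeq (hF : IsClosed F) : IsClosed (MahavierSeq F) := by
  rw [MahavierSeq, ofPred_forall]
  exact isClosed_iInter fun i => hF.preimage
    ((continuous_apply i).prodMk (continuous_apply (i + 1)))

theorem sepTurbulent_shiftMap_iterate_of_crWitness [CompactSpace X] {n : ℕ} (hn : 1 ≤ n)
    (h : CRWitness F n) : SepTurbulent ((shiftMap F)^[n]) := by
  obtain ⟨K, L, hKne, hLne, hKc, hLc, hKM, hLM, hKL, hsub⟩ := h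
  have hB : K ∪ L ⊆ Mahavier F n := union_subset hKM hLM
  have hpred : ∀ y ∈ K ∪ L,
      (∃ c ∈ K, c (Fin.last n) = y 0) ∧ (∃ c ∈ L, c (Fin.last n) = y 0) := fun y hy =>
    hsub (hy.imp (mem_image_of_mem fun x : Fin (n + 1) → X => x 0)
      (mem_image_of_mem fun x : Fin (n + 1) → X => x 0))
  refine ⟨_, _,
    nonempty_blockChains_starting_in hn hB subset_union_left hKc hKne fun y hy => (hpred y hy).1,
    nonempty_blockChains_starting_in hn hB subset_union_right hLc hLne fun y hy => (hpred y hy).2,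
    isClosed_blockChains_starting_in hKc (hKc.union hLc),
    isClosed_blockChains_starting_in hLc (hKc.union hLc),
    disjoint_left.2 fun x hxK hxL => disjoint_left.1 hKL hxK.1 hxL.1,
    (union_subset (preimage_mono inter_subset_right) (preimage_mono inter_subset_right)).trans
      (subset_inter ?_ ?_)⟩
  · exact subset_shiftMap_iterate_image_blockChains hn hB subset_union_left
      fun y hy => (hpred y hy).1
  · exact subset_shiftMap_iterate_image_blockChains hn hB subset_union_right
      fun y hy => (hpred y hy).2

theorem crTurbulent_of_sepTurbulent_shiftMap_iterate [T2Space X] [CompactSpace X]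
    (hF : IsClosed F) {m : ℕ} (hm : 1 ≤ m) (h : SepTurbulent ((shiftMap F)^[m])) :
    CRTurbulent F := by
  obtain ⟨K, L, hKne, hLne, hKc, hLc, hKL, hsub⟩ := h
  have : CompactSpace (MahavierSeq F) :=
    isCompact_iff_compactSpace.1 (isClosed_mahavierSeq hF).isCompact
  have hKcpt := hKc.isCompact.image continuous_subtype_val
  have hLcpt := hLc.isCompact.image continuous_subtype_val
  obtain ⟨M, hM⟩ := exists_seqTrunc_image_disjoint hKcpt hLcpt
    ((disjoint_image_iff Subtype.val_injective).2 hKL)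
  set N := m * (M + 1) with hN
  have hcover : K ∪ L ⊆ (shiftMap F)^[N] '' K ∩ (shiftMap F)^[N] '' L := by
    rw [hN, Function.iterate_mul]
    exact subset_inter
      (subset_image_iterate_succ (hsub.trans inter_subset_left) subset_union_left M)
      (subset_image_iterate_succ (hsub.trans inter_subset_right) subset_union_right M)
  let trunc : Set (MahavierSeq F) → Set (Fin (N + 1) → X) :=
    fun A => seqTrunc N '' (Subtype.val '' A)
  have hlast : ∀ A, ∀ x ∈ (shiftMap F)^[N] '' A,
      x.1 0 ∈ (fun x => x (Fin.last N)) '' trunc A := by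
    rintro A _ ⟨y, hyA, rfl⟩
    exact ⟨_, ⟨_, ⟨y, hyA, rfl⟩, rfl⟩, by rw [shiftMap_iterate_apply, zero_add]; rfl⟩
  have hfirst : ∀ x ∈ K ∪ L, x.1 0 ∈
      (fun x => x (Fin.last N)) '' trunc K ∩ (fun x => x (Fin.last N)) '' trunc L :=
    fun x hx => ⟨hlast K x (hcover hx).1, hlast L x (hcover hx).2⟩
  refine ⟨N, Nat.mul_pos hm M.succ_pos, trunc K, trunc L, (hKne.image _).image _,
    (hLne.image _).image _, (hKcpt.image (continuous_seqTrunc N)).isClosed,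
    (hLcpt.image (continuous_seqTrunc N)).isClosed, ?_, ?_,
    hM N (M.le_succ.trans (Nat.le_mul_of_pos_left _ hm)), ?_⟩
  · rintro _ ⟨_, ⟨x, -, rfl⟩, rfl⟩
    exact seqTrunc_mem_mahavier x.2 N
  · rintro _ ⟨_, ⟨x, -, rfl⟩, rfl⟩
    exact seqTrunc_mem_mahavier x.2 N
  · rintro _ (⟨_, ⟨_, ⟨x, hx, rfl⟩, rfl⟩, rfl⟩ | ⟨_, ⟨_, ⟨x, hx, rfl⟩, rfl⟩, rfl⟩)
    exacts [hfirst x (Or.inl hx), hfirst x (Or.inr hx)]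

end Shift

/-- A closed relation `F` on a compact metric space `X` is CR-turbulent
if and only if there is `n ≥ 2` such that `(X_F^+, (σ_F^+)^(n-1))` is separated turbulent. -/
theorem stmt0 {X : Type*} [MetricSpace X] [CompactSpace X] {F : Set (X × X)}
    (hF : IsClosed F) :
    CRTurbulent F ↔ ∃ n : ℕ, 2 ≤ n ∧ SepTurbulent ((shiftMap F)^[n - 1]) := by
  constructor
  · rintro ⟨n, hn, hW⟩
    exact ⟨n + 1, by omega, sepTurbulent_shiftMap_iterate_of_crWitness hn hW⟩
  · rintro ⟨n, hn, hT⟩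
    exact crTurbulent_of_sepTurbulent_shiftMap_iterate hF (by omega) hT
end

section
/- Let X be a compact metric space and F a closed relation on X. If F is CR-turbulent, then the topological entropy of the shift map σ_F^+ : X_F^+ → X_F^+ is strictly positive. -/
open Set

/-- auxiliary -/
def blkAt {X : Type*} (n : ℕ) (x : ℕ → X) (i : ℕ) : Fin (n + 1) → X :=
  fun j => x (i * n + j)

lemma exists_finite_chain {X : Type*} {n : ℕ} (hn : 1 ≤ n)
    {K L : Set (Fin (n + 1) → X)} (hKne : K.Nonempty)
    (hcond : ∀ b : Bool, ∀ x ∈ K ∪ L, ∃ s ∈ (bif b then K else L), s (Fin.last n) = x 0) :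
    ∀ (m : ℕ) (w : Fin m → Bool), ∃ x : ℕ → X,
      (∀ i : Fin m, blkAt n x i ∈ (bif w i then K else L)) ∧ blkAt n x m ∈ K := by
  intro m
  induction m with
  | zero =>
    intro w
    obtain ⟨g, hg⟩ := hKne
    refine ⟨fun t => g ⟨min t n, by omega⟩, fun i => i.elim0, ?_⟩
    have : blkAt n (fun t => g ⟨min t n, by omega⟩) 0 = g := by
      funext j
      simp only [blkAt, Nat.zero_mul, Nat.zero_add]
      congr 1
      exact Fin.ext (by simp [Nat.min_eq_left (Nat.le_of_lt_succ j.2)])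
    rw [this]; exact hg
  | succ m ih =>
    intro w
    obtain ⟨x, hx, hxK⟩ := ih (fun i => w i.succ)
    have hx0 : blkAt n x 0 ∈ K ∪ L := by
      cases m with
      | zero => exact Or.inl hxK
      | succ m' =>
        have h0 := hx 0
        cases hw : w (0 : Fin m'.succ).succ <;> rw [hw] at h0
        · exact Or.inr h0
        · exact Or.inl h0
    obtain ⟨s, hs, hsl⟩ := hcond (w 0) _ hx0
    have hsl' : s (Fin.last n) = x 0 := by
      rw [hsl]; simp [blkAt]
    refine ⟨fun t => if h : t < n then s ⟨t, by omega⟩ else x (t - n), ?_, ?_⟩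
    · intro i
      have key : ∀ i' : ℕ, blkAt n (fun t => if h : t < n then s ⟨t, by omega⟩ else x (t - n))
          (i' + 1) = blkAt n x i' := by
        intro i'
        funext j
        have h1 : (i' + 1) * n = i' * n + n := by rw [Nat.succ_mul]
        have h2 : ¬ ((i' + 1) * n + (j : ℕ) < n) := by omega
        simp only [blkAt, dif_neg h2]
        congr 1
        omega
      refine Fin.cases ?_ ?_ i
      · have : blkAt n (fun t => if h : t < n then s ⟨t, by omega⟩ else x (t - n)) 0 = s := by
          funext j
          simp only [blkAt, Nat.zero_mul, Nat.zero_add]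
          by_cases h : (j : ℕ) < n
          · rw [dif_pos h]
          · have hj : (j : ℕ) = n := by omega
            rw [dif_neg h]
            have : j = Fin.last n := Fin.ext hj
            rw [this, hsl']
            congr 1
            simp
        simpa [this] using hs
      · intro i'
        have := key i'
        simpa [Fin.val_succ, this] using hx i'
    · have key : blkAt n (fun t => if h : t < n then s ⟨t, by omega⟩ else x (t - n))
          (m + 1) = blkAt n x m := by
        funext j
        have h1 : (m + 1) * n = m * n + n := by rw [Nat.succ_mul]
        have h2 : ¬ ((m + 1) * n + (j : ℕ) < n) := by omega
        simp only [blkAt, dif_neg h2]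
        congr 1
        omega
      rw [key]; exact hxK

lemma chain_pairs {X : Type*} {F : Set (X × X)} {n : ℕ} (hn : 1 ≤ n) {x : ℕ → X} {m : ℕ}
    (h : ∀ i, i < m → blkAt n x i ∈ Mahavier F n) :
    ∀ t, t < m * n → (x t, x (t + 1)) ∈ F := by
  intro t ht
  have hq : t / n < m := (Nat.div_lt_iff_lt_mul (by omega)).2 ht
  have hr : t % n < n := Nat.mod_lt _ (by omega)
  have := h (t / n) hq ⟨t % n, hr⟩
  simp only [blkAt, Fin.coe_castSucc, Fin.val_succ] at this
  have e1 : t / n * n + (t % n) = t := by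
    have h := Nat.div_add_mod t n; rw [Nat.mul_comm]; omega
  have e2 : t / n * n + (t % n + 1) = t + 1 := by
    rw [Nat.mul_comm]; have h := Nat.div_add_mod t n; omega
  rwa [e1, e2] at this

lemma exists_point {X : Type*} [MetricSpace X] [CompactSpace X] {F : Set (X × X)}
    (hF : IsClosed F) {n : ℕ} (hn : 1 ≤ n) {K L : Set (Fin (n + 1) → X)} (hKne : K.Nonempty)
    (hKc : IsClosed K) (hLc : IsClosed L) (hKM : K ⊆ Mahavier F n) (hLM : L ⊆ Mahavier F n)
    (hcond : ∀ b : Bool, ∀ x ∈ K ∪ L, ∃ s ∈ (bif b then K else L), s (Fin.last n) = x 0)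
    (m : ℕ) (w : Fin m → Bool) :
    ∃ x : ℕ → X, x ∈ MahavierSeq F ∧ ∀ i : Fin m, blkAt n x i ∈ (bif w i then K else L) := by
  set V : ℕ → Set (ℕ → X) := fun j =>
    (⋂ i : Fin m, (fun x => blkAt n x i) ⁻¹' (bif w i then K else L)) ∩
      (⋂ t : ℕ, ⋂ _ : t < j, (fun x : ℕ → X => (x t, x (t + 1))) ⁻¹' F) with hV
  have hVc : ∀ j, IsClosed (V j) := by
    intro j
    apply IsClosed.inter
    · apply isClosed_iInter
      intro i
      apply IsClosed.preimage
      · exact continuous_pi fun j' => continuous_apply _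
      · cases w i
        · exact hLc
        · exact hKc
    · apply isClosed_iInter; intro t; apply isClosed_iInter; intro _
      exact hF.preimage ((continuous_apply t).prodMk (continuous_apply (t + 1)))
  have hVne : ∀ j, (V j).Nonempty := by
    intro j
    obtain ⟨x, hx, hxK⟩ := exists_finite_chain hn hKne hcond (m + j)
      (fun i => if h : (i : ℕ) < m then w ⟨i, h⟩ else true)
    have hBM : ∀ b : Bool, (bif b then K else L) ⊆ Mahavier F n := by
      intro b; cases b
      · exact hLM
      · exact hKM
    refine ⟨x, ?_, ?_⟩
    · apply mem_iInter.2
      intro i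
      have h2 := hx ⟨(i : ℕ), by omega⟩
      rw [dif_pos i.isLt] at h2
      simpa only [Fin.eta, mem_preimage] using h2
    · simp only [mem_iInter]
      intro t ht
      have hblocks : ∀ i, i < m + j + 1 → blkAt n x i ∈ Mahavier F n := by
        intro i hi
        rcases Nat.lt_or_ge i (m + j) with h | h
        · exact hBM _ (hx ⟨i, h⟩)
        · have : i = m + j := by omega
          rw [this]; exact hKM hxK
      have ht' : t < (m + j + 1) * n := by
        have : m + j + 1 ≤ (m + j + 1) * n := Nat.le_mul_of_pos_right _ (by omega)
        omega
      exact chain_pairs hn hblocks t ht'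
  have hVmono : ∀ j, V (j + 1) ⊆ V j := by
    intro j x hx
    refine ⟨hx.1, ?_⟩
    exact mem_iInter₂.2 fun t ht => mem_iInter₂.1 hx.2 t (by omega : t < j + 1)
  obtain ⟨x, hx⟩ := IsCompact.nonempty_iInter_of_sequence_nonempty_isCompact_isClosed V
    hVmono hVne ((hVc 0).isCompact) hVc
  rw [mem_iInter] at hx
  refine ⟨x, ?_, ?_⟩
  · intro t
    exact mem_iInter₂.1 (hx (t + 1)).2 t (by omega)
  · intro i
    have := (hx 0).1
    rw [mem_iInter] at this
    exact this i

lemma sep_const {Y : Type*} [MetricSpace Y] [CompactSpace Y] {K L : Set Y}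
    (hKc : IsClosed K) (hLc : IsClosed L) (hKne : K.Nonempty) (hLne : L.Nonempty)
    (hd : Disjoint K L) : ∃ ε > 0, ∀ s ∈ K, ∀ t ∈ L, ε ≤ dist s t := by
  obtain ⟨s0, hs0, hmin⟩ := hKc.isCompact.exists_isMinOn hKne
    (Metric.continuous_infDist_pt L).continuousOn
  refine ⟨Metric.infDist s0 L, ?_, ?_⟩
  · exact (hLc.notMem_iff_infDist_pos hLne).1 (disjoint_left.1 hd hs0)
  · intro s hs t ht
    exact le_trans (hmin hs) (Metric.infDist_le_dist_of_mem ht)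

lemma shift_iter {X : Type*} {F : Set (X × X)} (k : ℕ) (z : MahavierSeq F) (t : ℕ) :
    (((shiftMap F)^[k]) z).1 t = z.1 (t + k) := by
  induction k generalizing z with
  | zero => rfl
  | succ k ih =>
    rw [Function.iterate_succ_apply, ih (shiftMap F z)]
    rfl

open Dynamics ENNReal EReal Uniformity

/-- If a closed relation `F` on a compact metric space is CR-turbulent, then
the topological entropy of the shift map `σ_F^+ : X_F^+ → X_F^+` is strictly positive. -/
theorem stmt1 {X : Type*} [MetricSpace X] [CompactSpace X] {F : Set (X × X)}
    (hF : IsClosed F) (h : CRTurbulent F) :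
    0 < Dynamics.coverEntropy (shiftMap F) Set.univ := by
  classical
  obtain ⟨n, hn, K, L, hKne, hLne, hKc, hLc, hKM, hLM, hdisj, hW⟩ := h
  have hcond : ∀ b : Bool, ∀ x ∈ K ∪ L, ∃ s ∈ (bif b then K else L), s (Fin.last n) = x 0 := by
    intro b x hx
    have hx0 : x 0 ∈ ((fun x => x (Fin.last n)) '' K ∩ (fun x => x (Fin.last n)) '' L) := by
      apply hW
      rcases hx with h | h
      · exact Or.inl ⟨x, h, rfl⟩
      · exact Or.inr ⟨x, h, rfl⟩
    cases b
    · obtain ⟨s, hs, hse⟩ := hx0.2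
      exact ⟨s, hs, hse⟩
    · obtain ⟨s, hs, hse⟩ := hx0.1
      exact ⟨s, hs, hse⟩
  obtain ⟨ε, hε, hsep⟩ := sep_const hKc hLc hKne hLne hdisj
  -- the space is compact
  have hMclosed : IsClosed (MahavierSeq F) := by
    have : MahavierSeq F = ⋂ t : ℕ, (fun x : ℕ → X => (x t, x (t + 1))) ⁻¹' F := by
      ext x
      simp [MahavierSeq, mem_iInter]
    rw [this]
    exact isClosed_iInter fun t =>
      hF.preimage ((continuous_apply t).prodMk (continuous_apply (t + 1)))
  haveI : CompactSpace (MahavierSeq F) := isCompact_iff_compactSpace.1 hMclosed.isCompact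
  -- the entourage
  set f : MahavierSeq F → X := fun z => z.1 0 with hf
  have hfc : Continuous f := (continuous_apply 0).comp continuous_subtype_val
  have hfu : UniformContinuous f := CompactSpace.uniformContinuous_of_continuous hfc
  set U : Set (MahavierSeq F × MahavierSeq F) :=
    (fun p : MahavierSeq F × MahavierSeq F => (f p.1, f p.2)) ⁻¹'
      {q : X × X | dist q.1 q.2 < ε / 2} with hUdef
  have hU : U ∈ 𝓤 (MahavierSeq F) := hfu (Metric.dist_mem_uniformity (by positivity))
  -- the points
  have hz : ∀ m (w : Fin m → Bool), ∃ z : MahavierSeq F,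
      ∀ i : Fin m, blkAt n z.1 i ∈ (bif w i then K else L) := by
    intro m w
    obtain ⟨x, hxM, hxb⟩ := exists_point hF hn hKne hKc hLc hKM hLM hcond m w
    exact ⟨⟨x, hxM⟩, hxb⟩
  choose zf hzf using hz
  -- separation of the points
  have hsepz : ∀ m (w w' : Fin m → Bool), w ≠ w' →
      ∃ t, t < m * n + 1 ∧ ε ≤ dist ((zf m w).1 t) ((zf m w').1 t) := by
    intro m w w' hww
    obtain ⟨i, hi⟩ := Function.ne_iff.1 hww
    have hb1 := hzf m w i
    have hb2 := hzf m w' i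
    have hblk : ε ≤ dist (blkAt n (zf m w).1 i) (blkAt n (zf m w').1 i) := by
      cases hw : w i <;> cases hw' : w' i <;> rw [hw] at hb1 <;> rw [hw'] at hb2
      · exact absurd (hw ▸ hw' ▸ rfl) hi
      · rw [dist_comm]
        exact hsep _ hb2 _ hb1
      · exact hsep _ hb1 _ hb2
      · exact absurd (hw ▸ hw' ▸ rfl) hi
    obtain ⟨j, hj⟩ : ∃ j : Fin (n + 1),
        ε ≤ dist (blkAt n (zf m w).1 i j) (blkAt n (zf m w').1 i j) := by
      by_contra hcon
      push_neg at hcon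
      exact absurd ((dist_pi_lt_iff hε).2 hcon) (not_lt.2 hblk)
    refine ⟨(i : ℕ) * n + (j : ℕ), ?_, hj⟩
    have h1 : (i : ℕ) + 1 ≤ m := i.2
    have h2 : ((i : ℕ) + 1) * n ≤ m * n := Nat.mul_le_mul_right n h1
    have h3 : (i : ℕ) * n + (j : ℕ) ≤ (i : ℕ) * n + n := by
      have := Nat.le_of_lt_succ j.2
      omega
    have h4 : (i : ℕ) * n + n = ((i : ℕ) + 1) * n := (Nat.succ_mul _ _).symm
    omega
  -- the dynamical nets
  have hnet : ∀ m : ℕ, ((2 : ℕ∞) ^ m) ≤ netMaxcard (shiftMap F) Set.univ U (m * n + 1) := by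
    intro m
    have hinj : Function.Injective (zf m) := by
      intro w w' hww
      by_contra hcon
      obtain ⟨t, _, ht⟩ := hsepz m w w' hcon
      rw [hww] at ht
      simp at ht
      exact absurd ht (not_le.2 hε)
    have hnet' : IsDynNetIn (shiftMap F) Set.univ U (m * n + 1)
        ↑(Finset.image (zf m) Finset.univ) := by
      refine ⟨subset_univ _, ?_⟩
      intro a ha b hb hab
      simp only [Finset.coe_image, Finset.coe_univ, Set.image_univ, mem_range] at ha hb
      obtain ⟨w, rfl⟩ := ha
      obtain ⟨w', rfl⟩ := hb
      have hww : w ≠ w' := fun e => hab (by rw [e])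
      obtain ⟨t, htlt, ht⟩ := hsepz m w w' hww
      refine Set.disjoint_left.2 fun y hy1 hy2 => ?_
      have k1 : (zf m w, y) ∈ dynEntourage (shiftMap F) U (m * n + 1) := hy1
      have k2 : (zf m w', y) ∈ dynEntourage (shiftMap F) U (m * n + 1) := hy2
      have e1 := mem_dynEntourage.1 k1 t htlt
      have e2 := mem_dynEntourage.1 k2 t htlt
      rw [hUdef] at e1 e2
      simp only [mem_preimage, mem_setOf_eq, hf] at e1 e2
      rw [shift_iter t (zf m w) 0, shift_iter t y 0] at e1
      rw [shift_iter t (zf m w') 0, shift_iter t y 0] at e2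
      simp only [Nat.zero_add] at e1 e2
      have : dist ((zf m w).1 t) ((zf m w').1 t) < ε :=
        calc dist ((zf m w).1 t) ((zf m w').1 t)
            ≤ dist ((zf m w).1 t) (y.1 t) + dist (y.1 t) ((zf m w').1 t) := dist_triangle _ _ _
          _ < ε / 2 + ε / 2 := by
              rw [dist_comm] at e2
              exact add_lt_add e1 e2
          _ = ε := by ring
      exact absurd ht (not_le.2 this)
    have hcard : (Finset.image (zf m) Finset.univ).card = 2 ^ m := by
      rw [Finset.card_image_of_injective _ hinj, Finset.card_univ]
      simp
    have := hnet'.card_le_netMaxcard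
    rwa [hcard, Nat.cast_pow, Nat.cast_ofNat] at this
  -- entropy estimate
  have hcover := netEntropyEntourage_le_coverEntropy (shiftMap F) Set.univ hU
  refine lt_of_lt_of_le ?_ hcover
  set c : EReal := ((Real.log 2 / (2 * n) : ℝ) : EReal) with hc
  have hc0 : 0 < c := by
    apply EReal.coe_pos.2
    have := Real.log_pos (by norm_num : (1 : ℝ) < 2)
    positivity
  refine lt_of_lt_of_le hc0 ?_
  rw [netEntropyEntourage]
  apply Filter.le_limsup_of_frequently_le'
  rw [Filter.frequently_atTop]
  intro M
  set m := max M 1 with hm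
  have hm1 : 1 ≤ m := le_max_right M 1
  refine ⟨m * n + 1, ?_, ?_⟩
  · have : m ≤ m * n := Nat.le_mul_of_pos_right _ (by omega)
    have : M ≤ m := le_max_left M 1
    omega
  · have hcard := hnet m
    have hcard' : ((2 : ℝ≥0∞) ^ m) ≤ ((netMaxcard (shiftMap F) Set.univ U (m * n + 1) : ℕ∞) : ℝ≥0∞) := by
      have := ENat.toENNReal_le.2 hcard
      rwa [ENat.toENNReal_pow, ENat.toENNReal_ofNat] at this
    have hlog : ((m : ℝ) * Real.log 2 : ℝ) ≤
        ENNReal.log ((netMaxcard (shiftMap F) Set.univ U (m * n + 1) : ℕ∞) : ℝ≥0∞) := by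
      have h1 := ENNReal.log_monotone hcard'
      rwa [ENNReal.log_pow, ENNReal.log_pos_real' (by norm_num), ENNReal.toReal_ofNat,
        ← EReal.coe_coe_eq_natCast, ← EReal.coe_mul] at h1
    have hdiv := monotone_div_right_of_nonneg
      (b := ((m * n + 1 : ℕ) : EReal)) (Nat.cast_nonneg' _) hlog
    have key : c ≤ (((m : ℝ) * Real.log 2 : ℝ) : EReal) / ((m * n + 1 : ℕ) : EReal) := by
      rw [hc, ← EReal.coe_coe_eq_natCast, ← EReal.coe_div, EReal.coe_le_coe_iff]
      have hnR : (0 : ℝ) < (n : ℝ) := by exact_mod_cast hn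
      have hNR : (0 : ℝ) < ((m * n + 1 : ℕ) : ℝ) := by positivity
      rw [div_le_div_iff₀ (by positivity) hNR]
      have hmn : 1 ≤ m * n := Nat.mul_le_mul hm1 hn
      have hnat : (m * n + 1 : ℕ) ≤ 2 * (m * n) := by omega
      have hlog2 : (0 : ℝ) < Real.log 2 := Real.log_pos (by norm_num)
      have hcast : ((m * n + 1 : ℕ) : ℝ) ≤ 2 * ((m : ℝ) * (n : ℝ)) := by
        exact_mod_cast hnat
      nlinarith [hcast, hlog2]
    exact le_trans key hdiv
end

section
/- Let n ≥ 2, let T : [0,1] → [0,1] be the tent map T(x) = 2x for 0 ≤ x ≤ 1/2 and T(x) = 2 − 2x for 1/2 ≤ x ≤ 1, and define f : {0,1,…,n−1} × [0,1] → {0,1,…,n−1} × [0,1] by f(k,x) = (1, T(x)) if k = 0 and f(k,x) = ((k+1) mod n, x) if k ≠ 0. Then f is n-turbulent but f is not m-turbulent for any m with 1 ≤ m < n. -/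
open Set

lemma modInj (n m a b : ℕ) (hm : m < n) (ha : a < n) (hb : b < n)
    (h : (a + m) % n = (b + m) % n) : a = b := by
  have h1 : (a + m) % n = if a + m < n then a + m else a + m - n := by
    split
    · exact Nat.mod_eq_of_lt ‹_›
    · rw [Nat.mod_eq_sub_mod (by omega)]
      exact Nat.mod_eq_of_lt (by omega)
  have h2 : (b + m) % n = if b + m < n then b + m else b + m - n := by
    split
    · exact Nat.mod_eq_of_lt ‹_›
    · rw [Nat.mod_eq_sub_mod (by omega)]
      exact Nat.mod_eq_of_lt (by omega)
  split at h1 <;> split at h2 <;> omega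

lemma iterA (n : ℕ) (hn : 2 ≤ n) (T : unitInterval → unitInterval)
    (f : Fin n × unitInterval → Fin n × unitInterval)
    (hf : ∀ (k : Fin n) (x : unitInterval),
      f (k, x) = if k.val = 0 then ((⟨1, Nat.lt_of_lt_of_le (by norm_num) hn⟩ : Fin n), T x)
        else (k + (⟨1, Nat.lt_of_lt_of_le (by norm_num) hn⟩ : Fin n), x)) :
    ∀ (j : ℕ) (k : Fin n) (x : unitInterval), 1 ≤ k.val → k.val + j ≤ n →
      f^[j] (k, x) = (⟨(k.val + j) % n, Nat.mod_lt _ (by omega)⟩, x) := by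
  intro j
  induction j with
  | zero =>
      intro k x h1 h2
      simp only [Function.iterate_zero, id]
      refine Prod.ext ?_ rfl
      exact Fin.ext (by simp [Nat.mod_eq_of_lt k.isLt])
  | succ j ih =>
      intro k x h1 h2
      rw [Function.iterate_succ_apply, hf, if_neg (by omega)]
      have hval : (k + (⟨1, by omega⟩ : Fin n)).val = (k.val + 1) % n := by
        rw [Fin.val_add]
      by_cases hk : k.val + 1 = n
      · have hj : j = 0 := by omega
        subst hj
        simp only [Function.iterate_zero, id]
        refine Prod.ext ?_ rfl
        refine Fin.ext ?_
        rw [hval]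
      · have hval' : (k + (⟨1, by omega⟩ : Fin n)).val = k.val + 1 := by
          rw [hval]; exact Nat.mod_eq_of_lt (by omega)
        rw [ih (k + ⟨1, by omega⟩) x (by omega) (by omega)]
        refine Prod.ext ?_ rfl
        refine Fin.ext ?_
        simp only [hval']
        congr 1
        omega

lemma fstIter (n : ℕ) (hn : 2 ≤ n) (T : unitInterval → unitInterval)
    (f : Fin n × unitInterval → Fin n × unitInterval)
    (hf : ∀ (k : Fin n) (x : unitInterval),
      f (k, x) = if k.val = 0 then ((⟨1, Nat.lt_of_lt_of_le (by norm_num) hn⟩ : Fin n), T x)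
        else (k + (⟨1, Nat.lt_of_lt_of_le (by norm_num) hn⟩ : Fin n), x)) :
    ∀ (j : ℕ) (z : Fin n × unitInterval), (f^[j] z).1.val = (z.1.val + j) % n := by
  have hstep : ∀ w : Fin n × unitInterval, (f w).1.val = (w.1.val + 1) % n := by
    rintro ⟨k, x⟩
    rw [hf]
    split
    · next h =>
        show (1 : ℕ) = (k.val + 1) % n
        rw [h]
        exact (Nat.mod_eq_of_lt (by omega)).symm
    · show (k + (⟨1, by omega⟩ : Fin n)).val = (k.val + 1) % n
      rw [Fin.val_add]
  intro j
  induction j with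
  | zero =>
      intro z
      simp [Nat.mod_eq_of_lt z.1.isLt]
  | succ j ih =>
      intro z
      rw [Function.iterate_succ_apply', hstep, ih, Nat.mod_add_mod, Nat.add_assoc]

/-- For `n ≥ 2`, with `T` the tent map on `[0,1]` and
`f : {0,…,n-1} × [0,1] → {0,…,n-1} × [0,1]` defined by `f(0,x) = (1, T x)` and
`f(k,x) = ((k+1) mod n, x)` for `k ≠ 0` (addition in `Fin n` is mod `n`), the map `f` is
`n`-turbulent but not `m`-turbulent for any `1 ≤ m < n`. -/
theorem stmt2 (n : ℕ) (hn : 2 ≤ n)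
    (T : unitInterval → unitInterval)
    (hT : ∀ x : unitInterval, (T x : ℝ) = min (2 * (x : ℝ)) (2 - 2 * (x : ℝ)))
    (f : Fin n × unitInterval → Fin n × unitInterval)
    (hf : ∀ (k : Fin n) (x : unitInterval),
      f (k, x) = if k.val = 0 then ((⟨1, by omega⟩ : Fin n), T x)
        else (k + (⟨1, by omega⟩ : Fin n), x)) :
    Turbulent (f^[n]) ∧ ∀ m : ℕ, 1 ≤ m → m < n → ¬ Turbulent (f^[m]) := by
  haveI : NeZero n := ⟨by omega⟩
  constructor
  · -- f^[n] is turbulent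
    have hfn : ∀ x : unitInterval, f^[n] ((0 : Fin n), x) = ((0 : Fin n), T x) := by
      intro x
      have h0 : f ((0 : Fin n), x) = ((⟨1, by omega⟩ : Fin n), T x) := by
        rw [hf]
        simp
      have hI := Function.iterate_succ_apply f (n - 1) ((0 : Fin n), x)
      have hn1 : n - 1 + 1 = n := by omega
      rw [Nat.succ_eq_add_one, hn1] at hI
      rw [hI, h0, iterA n hn T f hf (n - 1) ⟨1, by omega⟩ (T x) le_rfl (by show (1:ℕ) + (n-1) ≤ n; omega)]
      refine Prod.ext ?_ rfl
      refine Fin.ext ?_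
      show (1 + (n - 1)) % n = (0 : Fin n).val
      have : 1 + (n - 1) = n := by omega
      rw [this, Nat.mod_self, Fin.val_zero]
    refine ⟨{p : Fin n × unitInterval | p.1 = 0 ∧ (p.2 : ℝ) ≤ 1/2},
            {p : Fin n × unitInterval | p.1 = 0 ∧ 1/2 ≤ (p.2 : ℝ)},
            ⟨((0 : Fin n), 0), rfl, by norm_num⟩,
            ⟨((0 : Fin n), 1), rfl, by norm_num⟩, ?_, ?_, ?_, ?_⟩
    · exact (isClosed_eq continuous_fst continuous_const).inter
        (isClosed_le (continuous_subtype_val.comp continuous_snd) continuous_const)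
    · exact (isClosed_eq continuous_fst continuous_const).inter
        (isClosed_le continuous_const (continuous_subtype_val.comp continuous_snd))
    · rintro ⟨k, x⟩ ⟨⟨hk, hx1⟩, -, hx2⟩ ⟨k', x'⟩ ⟨⟨hk', hx1'⟩, -, hx2'⟩
      have : (x : ℝ) = 1/2 := le_antisymm hx1 hx2
      have h' : (x' : ℝ) = 1/2 := le_antisymm hx1' hx2'
      refine Prod.ext ?_ (Subtype.ext ?_) <;> simp_all
    · rintro ⟨k, x⟩ hp
      have hk : k = 0 := by rcases hp with h | h <;> exact h.1
      subst hk
      have hx0 : (0 : ℝ) ≤ (x : ℝ) := x.2.1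
      have hx1 : (x : ℝ) ≤ 1 := x.2.2
      constructor
      · refine ⟨((0 : Fin n), ⟨(x : ℝ)/2, by constructor <;> linarith⟩), ⟨rfl, ?_⟩, ?_⟩
        · show ((x : ℝ)/2) ≤ 1/2
          linarith
        · rw [hfn]
          refine Prod.ext rfl (Subtype.ext ?_)
          rw [hT]
          show min (2 * ((x : ℝ)/2)) (2 - 2 * ((x : ℝ)/2)) = (x : ℝ)
          rw [min_eq_left (by linarith)]
          ring
      · refine ⟨((0 : Fin n), ⟨1 - (x : ℝ)/2, by constructor <;> linarith⟩), ⟨rfl, ?_⟩, ?_⟩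
        · show (1:ℝ)/2 ≤ 1 - (x : ℝ)/2
          linarith
        · rw [hfn]
          refine Prod.ext rfl (Subtype.ext ?_)
          rw [hT]
          show min (2 * (1 - (x : ℝ)/2)) (2 - 2 * (1 - (x : ℝ)/2)) = (x : ℝ)
          rw [min_eq_right (by linarith)]
          ring
  · -- f^[m] is not turbulent for 1 ≤ m < n
    rintro m hm1 hm2 ⟨K, L, hKne, hLne, hKc, hLc, hsub, hcov⟩
    set prev : Fin n → Fin n := fun c => ⟨(c.val + (n - m)) % n, Nat.mod_lt _ (by omega)⟩ with hprev
    have hprevAdd : ∀ c : Fin n, ((prev c).val + m) % n = c.val := by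
      intro c
      show ((c.val + (n - m)) % n + m) % n = c.val
      rw [Nat.mod_add_mod]
      have h : c.val + (n - m) + m = c.val + n := by omega
      rw [h, Nat.add_mod_right]
      exact Nat.mod_eq_of_lt c.isLt
    have step : ∀ c : Fin n, (∃ x, ((c, x) ∈ K ∪ L)) →
        (∃ x, ((prev c, x) ∈ K)) ∧ (∃ x, ((prev c, x) ∈ L)) := by
      rintro c ⟨x, hx⟩
      obtain ⟨hK', hL'⟩ := hcov hx
      constructor
      · obtain ⟨⟨cw, xw⟩, hwK, hwe⟩ := hK'
        have h1 : (cw.val + m) % n = c.val := by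
          have h := fstIter n hn T f hf m (cw, xw)
          rw [hwe] at h
          exact h.symm
        have hw1 : cw = prev c := Fin.ext (modInj n m _ _ hm2 cw.isLt (prev c).isLt
          (by rw [h1, hprevAdd]))
        exact ⟨xw, hw1 ▸ hwK⟩
      · obtain ⟨⟨cw, xw⟩, hwL, hwe⟩ := hL'
        have h1 : (cw.val + m) % n = c.val := by
          have h := fstIter n hn T f hf m (cw, xw)
          rw [hwe] at h
          exact h.symm
        have hw1 : cw = prev c := Fin.ext (modInj n m _ _ hm2 cw.isLt (prev c).isLt
          (by rw [h1, hprevAdd]))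
        exact ⟨xw, hw1 ▸ hwL⟩
    -- find a good level ℓ with ℓ = 0 or ℓ > m
    have hex : ∃ ℓ : Fin n, ((∃ x, ((ℓ, x) ∈ K)) ∧ (∃ x, ((ℓ, x) ∈ L)))
        ∧ (ℓ.val = 0 ∨ m < ℓ.val) := by
      by_contra hno
      push_neg at hno
      have chain : ∀ t : ℕ, ∃ c : Fin n,
          ((∃ x, ((c, x) ∈ K)) ∧ (∃ x, ((c, x) ∈ L))) ∧ t + 1 ≤ c.val := by
        intro t
        induction t with
        | zero =>
            obtain ⟨⟨z1, z2⟩, hz⟩ := hKne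
            have hg := step z1 ⟨z2, Or.inl hz⟩
            refine ⟨prev z1, hg, ?_⟩
            have := hno _ hg
            omega
        | succ t ih =>
            obtain ⟨c, hc, hct⟩ := ih
            have hcb := hno c hc
            obtain ⟨xc, hxc⟩ := hc.1
            have hg := step c ⟨xc, Or.inl hxc⟩
            have hpb := hno _ hg
            refine ⟨prev c, hg, ?_⟩
            have hval : (prev c).val = (c.val + (n - m)) % n := rfl
            have hle : c.val + (n - m) ≤ n := by omega
            rcases eq_or_lt_of_le hle with he | hlt
            · rw [he] at hval
              rw [Nat.mod_self] at hval
              omega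
            · rw [Nat.mod_eq_of_lt hlt] at hval
              omega
      obtain ⟨c, -, h⟩ := chain n
      exact absurd c.isLt (by omega)
    obtain ⟨ℓ, ⟨⟨xa, hxa⟩, ⟨xb, hxb⟩⟩, hℓ⟩ := hex
    -- properties of ℓ' = prev ℓ
    have h3 : ((prev ℓ).val + m) % n = ℓ.val := hprevAdd ℓ
    have hval : (prev ℓ).val = (ℓ.val + (n - m)) % n := rfl
    have hprop : 1 ≤ (prev ℓ).val ∧ (prev ℓ).val + m ≤ n ∧ (prev ℓ).val ≠ ℓ.val := by
      rcases hℓ with h0 | hlt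
      · have hv : (prev ℓ).val = n - m := by
          rw [hval, h0, Nat.zero_add]
          exact Nat.mod_eq_of_lt (by omega)
        omega
      · have he : ℓ.val + (n - m) = (ℓ.val - m) + n := by omega
        have hv : (prev ℓ).val = ℓ.val - m := by
          rw [hval, he, Nat.add_mod_right]
          exact Nat.mod_eq_of_lt (by omega : ℓ.val - m < n)
        omega
    -- key: points above ℓ pull back to the same x at level prev ℓ
    have key : ∀ x : unitInterval, ((ℓ, x) ∈ K ∪ L) →
        (prev ℓ, x) ∈ K ∧ (prev ℓ, x) ∈ L := by
      intro x hx
      obtain ⟨hK', hL'⟩ := hcov hx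
      have hcomp : f^[m] (prev ℓ, x) = (ℓ, x) → True := fun _ => trivial
      constructor
      · obtain ⟨⟨cw, xw⟩, hwK, hwe⟩ := hK'
        have h1 : (cw.val + m) % n = ℓ.val := by
          have h := fstIter n hn T f hf m (cw, xw)
          rw [hwe] at h
          exact h.symm
        have hw1 : cw = prev ℓ := Fin.ext (modInj n m _ _ hm2 cw.isLt (prev ℓ).isLt
          (by rw [h1, h3]))
        rw [hw1] at hwe hwK
        have hc := iterA n hn T f hf m (prev ℓ) xw hprop.1 hprop.2.1
        rw [hc] at hwe
        have hx2 : xw = x := congrArg Prod.snd hwe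
        rw [← hx2]
        exact hwK
      · obtain ⟨⟨cw, xw⟩, hwL, hwe⟩ := hL'
        have h1 : (cw.val + m) % n = ℓ.val := by
          have h := fstIter n hn T f hf m (cw, xw)
          rw [hwe] at h
          exact h.symm
        have hw1 : cw = prev ℓ := Fin.ext (modInj n m _ _ hm2 cw.isLt (prev ℓ).isLt
          (by rw [h1, h3]))
        rw [hw1] at hwe hwL
        have hc := iterA n hn T f hf m (prev ℓ) xw hprop.1 hprop.2.1
        rw [hc] at hwe
        have hx2 : xw = x := congrArg Prod.snd hwe
        rw [← hx2]
        exact hwL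
    obtain ⟨hAK, hAL⟩ := key xa (Or.inl hxa)
    obtain ⟨hBK, hBL⟩ := key xb (Or.inr hxb)
    have hab : xa = xb := by
      have h := hsub ⟨hAK, hAL⟩ ⟨hBK, hBL⟩
      exact congrArg Prod.snd h
    have hmem : (ℓ, xa) ∈ K ∩ L := ⟨hxa, by rw [hab]; exact hxb⟩
    have h := hsub hmem ⟨hAK, hAL⟩
    have := congrArg (fun p => (Prod.fst p).val) h
    exact hprop.2.2 this.symm
end

section
/- Let X be a compact metric space and f : X → X continuous, with graph Γ(f) = {(x, f(x)) : x ∈ X}. Then the closed relation Γ(f) is CR-turbulent if and only if f is separated m-turbulent for some positive integer m. -/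
open Set

/-- The orbit segment `(a, f a, …, f^[n] a)`; on the graph of `f` these are exactly the
points of the Mahavier product, so the first coordinate identifies `X_{Γ(f)}^n` with `X`. -/
def orbitTuple {X : Type*} (f : X → X) (n : ℕ) (a : X) : Fin (n + 1) → X :=
  fun i => f^[i] a

section OrbitTuple

variable {X : Type*} (f : X → X) (n : ℕ)

lemma orbitTuple_zero (a : X) : orbitTuple f n a 0 = a := rfl

lemma orbitTuple_last (a : X) : orbitTuple f n a (Fin.last n) = f^[n] a := by
  simp only [orbitTuple, Fin.val_last]

lemma orbitTuple_injective : Function.Injective (orbitTuple f n) :=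
  fun a b hab => by rw [← orbitTuple_zero f n a, hab, orbitTuple_zero]

lemma continuous_orbitTuple [TopologicalSpace X] (hf : Continuous f) :
    Continuous (orbitTuple f n) :=
  continuous_pi fun i => hf.iterate i

lemma orbitTuple_mem_mahavier (a : X) :
    orbitTuple f n a ∈ Mahavier {p : X × X | p.2 = f p.1} n := fun i => by
  change f^[i.succ] a = f (f^[i.castSucc] a)
  rw [Fin.val_succ, Fin.val_castSucc, Function.iterate_succ_apply']

lemma image_orbitTuple_subset_mahavier (S : Set X) :
    orbitTuple f n '' S ⊆ Mahavier {p : X × X | p.2 = f p.1} n :=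
  image_subset_iff.2 fun a _ => orbitTuple_mem_mahavier f n a

lemma eq_orbitTuple_of_mem_mahavier {x : Fin (n + 1) → X}
    (hx : x ∈ Mahavier {p : X × X | p.2 = f p.1} n) : x = orbitTuple f n (x 0) := by
  funext ⟨k, hk⟩
  induction k with
  | zero => rfl
  | succ k ih =>
    have hstep : x ⟨k + 1, hk⟩ = f (x ⟨k, k.lt_of_succ_lt hk⟩) :=
      hx ⟨k, Nat.lt_of_succ_lt_succ hk⟩
    rw [hstep, ih (k.lt_of_succ_lt hk)]
    exact (Function.iterate_succ_apply' f k (x 0)).symm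

lemma image_eval_zero_orbitTuple (S : Set X) :
    (fun x => x 0) '' (orbitTuple f n '' S) = S := by
  simp only [image_image, orbitTuple_zero, image_id']

lemma image_eval_last_orbitTuple (S : Set X) :
    (fun x => x (Fin.last n)) '' (orbitTuple f n '' S) = f^[n] '' S := by
  simp only [image_image, orbitTuple_last]

lemma eq_image_orbitTuple_of_subset_mahavier {K : Set (Fin (n + 1) → X)}
    (hK : K ⊆ Mahavier {p : X × X | p.2 = f p.1} n) :
    K = orbitTuple f n '' ((fun x => x 0) '' K) := by
  rw [image_image]
  nth_rw 1 [← image_id' K]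
  exact image_congr fun x hx => eq_orbitTuple_of_mem_mahavier f n (hK hx)

end OrbitTuple

lemma crWitness_graph_iff_sepTurbulent_iterate {X : Type*} [TopologicalSpace X] [T2Space X]
    [CompactSpace X] {f : X → X} (hf : Continuous f) (n : ℕ) :
    CRWitness {p : X × X | p.2 = f p.1} n ↔ SepTurbulent (f^[n]) := by
  have hO := (continuous_orbitTuple f n hf).isClosedEmbedding (orbitTuple_injective f n)
  have witness_iff : ∀ K₀ L₀ : Set X,
      ((orbitTuple f n '' K₀).Nonempty ∧ (orbitTuple f n '' L₀).Nonempty ∧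
        IsClosed (orbitTuple f n '' K₀) ∧ IsClosed (orbitTuple f n '' L₀) ∧
        Disjoint (orbitTuple f n '' K₀) (orbitTuple f n '' L₀) ∧
        ((fun x => x 0) '' (orbitTuple f n '' K₀) ∪ (fun x => x 0) '' (orbitTuple f n '' L₀)) ⊆
          ((fun x => x (Fin.last n)) '' (orbitTuple f n '' K₀) ∩
            (fun x => x (Fin.last n)) '' (orbitTuple f n '' L₀))) ↔
      (K₀.Nonempty ∧ L₀.Nonempty ∧ IsClosed K₀ ∧ IsClosed L₀ ∧ Disjoint K₀ L₀ ∧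
        K₀ ∪ L₀ ⊆ f^[n] '' K₀ ∩ f^[n] '' L₀) := fun K₀ L₀ => by
    rw [image_nonempty, image_nonempty, ← hO.isClosed_iff_image_isClosed,
      ← hO.isClosed_iff_image_isClosed, disjoint_image_iff (orbitTuple_injective f n),
      image_eval_zero_orbitTuple, image_eval_zero_orbitTuple, image_eval_last_orbitTuple,
      image_eval_last_orbitTuple]
  constructor
  · rintro ⟨K, L, hK, hL, hKc, hLc, hKM, hLM, hKL, hsub⟩
    obtain ⟨K₀, rfl⟩ : ∃ K₀, K = orbitTuple f n '' K₀ :=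
      ⟨_, eq_image_orbitTuple_of_subset_mahavier f n hKM⟩
    obtain ⟨L₀, rfl⟩ : ∃ L₀, L = orbitTuple f n '' L₀ :=
      ⟨_, eq_image_orbitTuple_of_subset_mahavier f n hLM⟩
    exact ⟨_, _, (witness_iff _ _).1 ⟨hK, hL, hKc, hLc, hKL, hsub⟩⟩
  · rintro ⟨K₀, L₀, hw⟩
    obtain ⟨hK, hL, hKc, hLc, hKL, hsub⟩ := (witness_iff K₀ L₀).2 hw
    exact ⟨_, _, hK, hL, hKc, hLc, image_orbitTuple_subset_mahavier f n K₀,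
      image_orbitTuple_subset_mahavier f n L₀, hKL, hsub⟩

/-- For a continuous `f : X → X` on a compact metric space, the closed
relation `Γ(f)` is CR-turbulent if and only if `f` is separated `m`-turbulent for some
positive integer `m`. -/
theorem stmt3 {X : Type*} [MetricSpace X] [CompactSpace X] (f : X → X) (hf : Continuous f) :
    CRTurbulent {p : X × X | p.2 = f p.1} ↔ ∃ m : ℕ, 1 ≤ m ∧ SepTurbulent (f^[m]) :=
  exists_congr fun n => and_congr_right fun _ => crWitness_graph_iff_sepTurbulent_iterate hf n
end

section
/- Let X be a compact metric space and f : X → X continuous. Suppose there are nonempty closed sets K_0, K_1 ⊆ X and a point x ∈ X such that K_0 ∩ K_1 = {x}, K_0 ∪ K_1 ⊆ f(K_0) ∩ f(K_1), and f(x) ≠ x. Then f is separated 2-turbulent. -/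
open Set

/-!
Take `K = K₀ ∩ f⁻¹(K₀)` and `L = K₁ ∩ f⁻¹(K₁)`. Lifting a point of `K₀ ∪ K₁` twice through
`f`, first into `K₀` and then again into `K₀`, gives a preimage under `f²` in `K`, and
likewise in `L`. A common point of `K` and `L` would lie in `K₀ ∩ K₁ = {x}` together with
its image, forcing `f x = x`.
-/

theorem subset_iterate_two_image_inter_preimage {Z : Type*} {f : Z → Z} {S A : Set Z}
    (hS : S ⊆ f '' A) (hA : A ⊆ f '' A) : S ⊆ f^[2] '' (A ∩ f ⁻¹' A) := by
  intro w hw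
  obtain ⟨z, hz, rfl⟩ := hS hw
  obtain ⟨u, hu, rfl⟩ := hA hz
  exact ⟨u, ⟨hu, hz⟩, rfl⟩

theorem Set.Nonempty.inter_preimage_of_subset_image {Z : Type*} {f : Z → Z} {A : Set Z}
    (hne : A.Nonempty) (hA : A ⊆ f '' A) : (A ∩ f ⁻¹' A).Nonempty :=
  (hne.mono (subset_iterate_two_image_inter_preimage hA hA)).of_image

theorem disjoint_inter_preimage_of_inter_eq_singleton {Z : Type*} {f : Z → Z} {A B : Set Z}
    {x : Z} (hAB : A ∩ B = {x}) (hfx : f x ≠ x) :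
    Disjoint (A ∩ f ⁻¹' A) (B ∩ f ⁻¹' B) := by
  rw [Set.disjoint_left]
  rintro z ⟨hzA, hfzA⟩ ⟨hzB, hfzB⟩
  have hz : z ∈ A ∩ B := ⟨hzA, hzB⟩
  have hfz : f z ∈ A ∩ B := ⟨hfzA, hfzB⟩
  rw [hAB, mem_singleton_iff] at hz hfz
  exact hfx (hz ▸ hfz)

theorem stmt5_general {X : Type*} [MetricSpace X] (f : X → X) (hf : Continuous f)
    (K₀ K₁ : Set X) (h0ne : K₀.Nonempty) (h1ne : K₁.Nonempty)
    (h0c : IsClosed K₀) (h1c : IsClosed K₁) (x : X) (hx : K₀ ∩ K₁ = {x})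
    (hsub : K₀ ∪ K₁ ⊆ f '' K₀ ∩ f '' K₁) (hfx : f x ≠ x) :
    SepTurbulent (f^[2]) := by
  have hK₀ : K₀ ∪ K₁ ⊆ f '' K₀ := hsub.trans inter_subset_left
  have hK₁ : K₀ ∪ K₁ ⊆ f '' K₁ := hsub.trans inter_subset_right
  have hself₀ : K₀ ⊆ f '' K₀ := subset_union_left.trans hK₀
  have hself₁ : K₁ ⊆ f '' K₁ := subset_union_right.trans hK₁
  refine ⟨K₀ ∩ f ⁻¹' K₀, K₁ ∩ f ⁻¹' K₁, h0ne.inter_preimage_of_subset_image hself₀,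
    h1ne.inter_preimage_of_subset_image hself₁, h0c.inter (h0c.preimage hf),
    h1c.inter (h1c.preimage hf), disjoint_inter_preimage_of_inter_eq_singleton hx hfx, ?_⟩
  exact (union_subset_union inter_subset_left inter_subset_left).trans
    (subset_inter (subset_iterate_two_image_inter_preimage hK₀ hself₀)
      (subset_iterate_two_image_inter_preimage hK₁ hself₁))

/-- If `f : X → X` is continuous on a compact metric space, `K₀, K₁` are
nonempty closed sets with `K₀ ∩ K₁ = {x}`, `K₀ ∪ K₁ ⊆ f(K₀) ∩ f(K₁)` and `f x ≠ x`, then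
`f` is separated 2-turbulent. -/
theorem stmt5 {X : Type*} [MetricSpace X] [CompactSpace X] (f : X → X) (hf : Continuous f)
    (K₀ K₁ : Set X) (h0ne : K₀.Nonempty) (h1ne : K₁.Nonempty)
    (h0c : IsClosed K₀) (h1c : IsClosed K₁) (x : X) (hx : K₀ ∩ K₁ = {x})
    (hsub : K₀ ∪ K₁ ⊆ f '' K₀ ∩ f '' K₁) (hfx : f x ≠ x) :
    SepTurbulent (f^[2]) :=
  stmt5_general f hf K₀ K₁ h0ne h1ne h0c h1c x hx hsub hfx
end

section
/- Let X be a compact metric space and F a finite subset of X × X. Then F is CR-turbulent if and only if there exist n ∈ ℕ and two distinct points x = (x_1,…,x_{n+1}) and y = (y_1,…,y_{n+1}) in X_F^n such that x_1 = y_1 = x_{n+1} = y_{n+1}. -/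
open Set

namespace Stmt6Aux

def chainPt {γ : Type*} (step : ℕ → γ → γ) (s₀ : γ) : ℕ → γ
  | 0 => s₀
  | j + 1 => step j (chainPt step s₀ j)

def chainWalk {X γ : Type*} (n : ℕ) (blk : ℕ → γ → (Fin (n + 1) → X))
    (step : ℕ → γ → γ) (s₀ : γ) (i : ℕ) : X :=
  blk (i / n) (chainPt step s₀ (i / n)) ⟨n - i % n, Nat.lt_succ_of_le (Nat.sub_le _ _)⟩

theorem exists_iterate_idem {γ : Type*} [Finite γ] (f : γ → γ) :
    ∃ m, 0 < m ∧ ∀ x, f^[m] (f^[m] x) = f^[m] x := by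
  obtain ⟨a, b, hab, he⟩ := Finite.exists_ne_map_eq_of_infinite (fun k : ℕ => f^[k])
  suffices H : ∀ a b : ℕ, a < b → f^[a] = f^[b] →
      ∃ m, 0 < m ∧ ∀ x, f^[m] (f^[m] x) = f^[m] x by
    rcases (Ne.lt_or_gt hab) with h | h
    · exact H a b h he
    · exact H b a h he.symm
  clear hab he a b
  intro a b hlt he
  set d := b - a with hd
  have hd1 : 0 < d := by omega
  have hstep : ∀ x, a ≤ x → f^[x + d] = f^[x] := by
    intro x hx
    have h1 : x + d = (x - a) + b := by omega
    have h2 : (x - a) + a = x := by omega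
    rw [h1, Function.iterate_add, ← he, ← Function.iterate_add, h2]
  have hmul : ∀ e x, a ≤ x → f^[x + e * d] = f^[x] := by
    intro e
    induction e with
    | zero => simp
    | succ e ih =>
      intro x hx
      have h1 : x + (e + 1) * d = (x + e * d) + d := by ring
      rw [h1, hstep _ (by omega), ih x hx]
  have hmd : a + 1 ≤ (a + 1) * d := by
    have := Nat.mul_le_mul_left (a + 1) hd1
    simpa using this
  refine ⟨(a + 1) * d, by positivity, fun x => ?_⟩
  have hh := hmul (a + 1) ((a + 1) * d) (by omega)
  calc f^[(a+1)*d] (f^[(a+1)*d] x) = f^[(a+1)*d + (a+1)*d] x :=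
        (Function.iterate_add_apply _ _ _ _).symm
    _ = f^[(a+1)*d] x := by rw [hh]

section
variable {X γ : Type*} {F : Set (X × X)} {n : ℕ}
  {blk : ℕ → γ → (Fin (n + 1) → X)} {ι : γ → X}

theorem chainWalk_mul (step : ℕ → γ → γ) (hn : 0 < n)
    (h2 : ∀ j s, blk j s (Fin.last n) = ι s) (s₀ : γ) (j : ℕ) :
    chainWalk n blk step s₀ (j * n) = ι (chainPt step s₀ j) := by
  have hd : j * n / n = j := Nat.mul_div_cancel j hn
  have hm : j * n % n = 0 := Nat.mul_mod_left j n
  unfold chainWalk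
  simp only [hd, hm]
  have := h2 j (chainPt step s₀ j)
  convert this using 2
  exact Fin.ext (by simp)

theorem chainWalk_rel (step : ℕ → γ → γ) (hn : 0 < n)
    (h1 : ∀ j s, blk j s ∈ Mahavier F n)
    (h2 : ∀ j s, blk j s (Fin.last n) = ι s)
    (h3 : ∀ j s, blk j s 0 = ι (step j s)) (s₀ : γ) (i : ℕ) :
    (chainWalk n blk step s₀ (i + 1), chainWalk n blk step s₀ i) ∈ F := by
  have htn : i % n < n := Nat.mod_lt _ hn
  have hid : i % n + i / n * n = i := Nat.mod_add_div' i n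
  by_cases hc : i % n + 1 < n
  · have hq : (i + 1) / n = i / n := by
      conv_lhs => rw [show i + 1 = (i % n + 1) + (i / n) * n by omega]
      rw [Nat.add_mul_div_right _ _ hn, Nat.div_eq_of_lt hc, Nat.zero_add]
    have hr : (i + 1) % n = i % n + 1 := by
      conv_lhs => rw [show i + 1 = (i % n + 1) + (i / n) * n by omega]
      rw [Nat.add_mul_mod_self_right, Nat.mod_eq_of_lt hc]
    have key := h1 (i / n) (chainPt step s₀ (i / n)) ⟨n - i % n - 1, by omega⟩
    have c1 : Fin.castSucc (⟨n - i % n - 1, by omega⟩ : Fin n)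
        = (⟨n - (i % n + 1), by omega⟩ : Fin (n + 1)) := Fin.ext (by simp; omega)
    have c2 : Fin.succ (⟨n - i % n - 1, by omega⟩ : Fin n)
        = (⟨n - i % n, by omega⟩ : Fin (n + 1)) := Fin.ext (by simp; omega)
    rw [c1, c2] at key
    unfold chainWalk
    simp only [hq, hr]
    convert key using 3
  · -- i % n = n - 1, so i + 1 = (i/n + 1) * n
    have he : i + 1 = (i / n + 1) * n := by
      have h' : (i / n + 1) * n = i / n * n + n := by ring
      omega
    rw [he, chainWalk_mul step hn h2]
    have hcp : chainPt step s₀ (i / n + 1) = step (i / n) (chainPt step s₀ (i / n)) := rfl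
    rw [hcp, ← h3 (i / n) (chainPt step s₀ (i / n))]
    have key := h1 (i / n) (chainPt step s₀ (i / n)) ⟨0, hn⟩
    have c1 : Fin.castSucc (⟨0, hn⟩ : Fin n) = (0 : Fin (n + 1)) := Fin.ext rfl
    have c2 : Fin.succ (⟨0, hn⟩ : Fin n)
        = (⟨n - i % n, Nat.lt_succ_of_le (Nat.sub_le _ _)⟩ : Fin (n + 1)) :=
      Fin.ext (by simp; omega)
    rw [c1, c2] at key
    unfold chainWalk
    convert key using 3

theorem chainWalk_le (step : ℕ → γ → γ) (hn : 0 < n)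
    (h2 : ∀ j s, blk j s (Fin.last n) = ι s)
    (h3 : ∀ j s, blk j s 0 = ι (step j s)) (s₀ : γ) (t : ℕ) (ht : t ≤ n) :
    chainWalk n blk step s₀ t
      = blk 0 s₀ ⟨n - t, Nat.lt_succ_of_le (Nat.sub_le _ _)⟩ := by
  by_cases hteq : t = n
  · rw [hteq]
    have h1 : chainWalk n blk step s₀ n = ι (chainPt step s₀ 1) := by
      have := chainWalk_mul (blk := blk) step hn h2 s₀ 1
      rwa [Nat.one_mul] at this
    rw [h1, show chainPt step s₀ 1 = step 0 s₀ from rfl, ← h3 0 s₀]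
    congr 1
    exact Fin.ext (by simp)
  · have hlt : t < n := by omega
    unfold chainWalk
    simp only [Nat.div_eq_of_lt hlt, Nat.mod_eq_of_lt hlt]
    rfl

end
end Stmt6Aux

open Stmt6Aux in
private theorem stmt6_fwd {X : Type*} [MetricSpace X] [CompactSpace X] {F : Set (X × X)}
    (hF : F.Finite) {n : ℕ} (hn : 1 ≤ n) {K L : Set (Fin (n + 1) → X)}
    (hKne : K.Nonempty) (hLne : L.Nonempty)
    (hKM : K ⊆ Mahavier F n) (hLM : L ⊆ Mahavier F n) (hdisj : Disjoint K L)
    (hsub : ((fun x => x 0) '' K ∪ (fun x => x 0) '' L) ⊆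
      ((fun x => x (Fin.last n)) '' K ∩ (fun x => x (Fin.last n)) '' L)) :
    ∃ N : ℕ, 1 ≤ N ∧ ∃ x y : Fin (N + 1) → X,
      x ∈ Mahavier F N ∧ y ∈ Mahavier F N ∧ x ≠ y ∧
      x 0 = y 0 ∧ x 0 = x (Fin.last N) ∧ y 0 = y (Fin.last N) := by
  classical
  have hn0 : 0 < n := hn
  set T : Set X := (fun w => w 0) '' K ∪ (fun w => w 0) '' L with hTdef
  have hTfin : T.Finite := by
    refine (hF.image Prod.fst).subset ?_
    rintro z (⟨w, hw, rfl⟩ | ⟨w, hw, rfl⟩)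
    · refine ⟨(w (Fin.castSucc ⟨0, hn0⟩), w (Fin.succ ⟨0, hn0⟩)), hKM hw ⟨0, hn0⟩, ?_⟩
      show w (Fin.castSucc ⟨0, hn0⟩) = w 0
      exact congrArg w (Fin.ext rfl)
    · refine ⟨(w (Fin.castSucc ⟨0, hn0⟩), w (Fin.succ ⟨0, hn0⟩)), hLM hw ⟨0, hn0⟩, ?_⟩
      exact congrArg w (Fin.ext rfl)
  haveI : Finite ↥T := hTfin.to_subtype
  have hKT : ∀ s : T, ∃ w, w ∈ K ∧ w (Fin.last n) = (s : X) ∧ w 0 ∈ T := by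
    intro s
    obtain ⟨w, hw, hwl⟩ := (hsub s.2).1
    exact ⟨w, hw, hwl, Or.inl ⟨w, hw, rfl⟩⟩
  have hLT : ∀ s : T, ∃ w, w ∈ L ∧ w (Fin.last n) = (s : X) ∧ w 0 ∈ T := by
    intro s
    obtain ⟨w, hw, hwl⟩ := (hsub s.2).2
    exact ⟨w, hw, hwl, Or.inr ⟨w, hw, rfl⟩⟩
  choose k hkK hkl hk0 using hKT
  choose l hlL hll hl0 using hLT
  set α : ↥T → ↥T := fun u => ⟨k u 0, hk0 u⟩ with hα
  set β : ↥T → ↥T := fun u => ⟨l u 0, hl0 u⟩ with hβ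
  obtain ⟨m, hm0, hmid⟩ := exists_iterate_idem α
  set θ : ↥T → ↥T := fun u => α^[m] (β u) with hθ
  obtain ⟨w₀, hw₀⟩ := hKne
  have ht₀ : w₀ 0 ∈ T := Or.inl ⟨w₀, hw₀, rfl⟩
  obtain ⟨q₀, hq₀0, hqid⟩ := exists_iterate_idem θ
  set s : ↥T := θ^[q₀] ⟨w₀ 0, ht₀⟩ with hs
  have hsθ : θ^[q₀] s = s := hqid _
  have hsα : α^[m] s = s := by
    have h1 : s = α^[m] (β (θ^[q₀ - 1] ⟨w₀ 0, ht₀⟩)) := by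
      rw [hs]
      conv_lhs => rw [show q₀ = (q₀ - 1) + 1 by omega, Function.iterate_succ_apply']
    rw [h1]
    exact hmid _
  set q := q₀ * m with hqdef
  have hq0 : 0 < q := Nat.mul_pos hq₀0 hm0
  have hθq : θ^[q] s = s := by
    rw [hqdef, Function.iterate_mul]
    exact Function.iterate_fixed hsθ m
  set M := (m + 1) * q with hM
  have hM0 : 0 < M := Nat.mul_pos (by omega) hq0
  set N := M * n with hN
  have hN0 : 0 < N := Nat.mul_pos hM0 hn0
  set stepx : ℕ → ↥T → ↥T := fun j u => if j % (m + 1) = 0 then β u else α u with hstepx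
  set blkx : ℕ → ↥T → (Fin (n + 1) → X) :=
    fun j u => if j % (m + 1) = 0 then l u else k u with hblkx
  set stepy : ℕ → ↥T → ↥T := fun _ u => α u with hstepy
  set blky : ℕ → ↥T → (Fin (n + 1) → X) := fun _ u => k u with hblky
  have h1x : ∀ j u, blkx j u ∈ Mahavier F n := by
    intro j u; simp only [hblkx]; split_ifs
    · exact hLM (hlL u)
    · exact hKM (hkK u)
  have h2x : ∀ j u, blkx j u (Fin.last n) = (u : X) := by
    intro j u; simp only [hblkx]; split_ifs
    · exact hll u
    · exact hkl u
  have h3x : ∀ j u, blkx j u 0 = ((stepx j u : ↥T) : X) := by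
    intro j u; simp only [hblkx, hstepx]; split_ifs
    · rfl
    · rfl
  have h1y : ∀ j u, blky j u ∈ Mahavier F n := fun j u => hKM (hkK u)
  have h2y : ∀ j u, blky j u (Fin.last n) = (u : X) := fun j u => hkl u
  have h3y : ∀ j u, blky j u 0 = ((stepy j u : ↥T) : X) := fun j u => rfl
  -- chain point computations
  have hpy : ∀ i, chainPt stepy s i = α^[i] s := by
    intro i; induction i with
    | zero => rfl
    | succ i ih =>
      rw [Function.iterate_succ_apply']
      show stepy i (chainPt stepy s i) = _
      rw [ih]
  have hpx_block : ∀ i jj, jj ≤ m →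
      chainPt stepx s ((m + 1) * i + (jj + 1))
        = α^[jj] (β (chainPt stepx s ((m + 1) * i))) := by
    intro i jj
    induction jj with
    | zero =>
      intro _
      show stepx ((m + 1) * i) (chainPt stepx s ((m + 1) * i)) = _
      simp only [hstepx, Nat.mul_mod_right, if_pos rfl]
      rfl
    | succ jj ih =>
      intro hjj
      have hmod : ((m + 1) * i + (jj + 1)) % (m + 1) = jj + 1 := by
        rw [Nat.mul_add_mod]
        exact Nat.mod_eq_of_lt (by omega)
      show stepx ((m + 1) * i + (jj + 1)) (chainPt stepx s ((m + 1) * i + (jj + 1))) = _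
      rw [ih (by omega)]
      simp only [hstepx, hmod]
      rw [if_neg (by omega), Function.iterate_succ_apply']
  have hpx : ∀ i, chainPt stepx s ((m + 1) * i) = θ^[i] s := by
    intro i; induction i with
    | zero => rfl
    | succ i ih =>
      have he : (m + 1) * (i + 1) = (m + 1) * i + (m + 1) := by ring
      rw [he, hpx_block i m le_rfl, ih, Function.iterate_succ_apply']
  have hxM0 : chainPt stepx s M = s := by
    rw [hM, hpx q, hθq]
  have hyM0 : chainPt stepy s M = s := by
    rw [hpy M, show M = m * ((m + 1) * q₀) by rw [hM, hqdef]; ring,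
      Function.iterate_mul]
    exact Function.iterate_fixed hsα _
  -- endpoint values
  have ex0 : chainWalk n blkx stepx s N = (s : X) := by
    rw [hN, chainWalk_mul stepx hn0 h2x s M, hxM0]
  have exN : chainWalk n blkx stepx s 0 = (s : X) := by
    have := chainWalk_mul (blk := blkx) stepx hn0 h2x s 0
    rwa [Nat.zero_mul] at this
  have ey0 : chainWalk n blky stepy s N = (s : X) := by
    rw [hN, chainWalk_mul stepy hn0 h2y s M, hyM0]
  have eyN : chainWalk n blky stepy s 0 = (s : X) := by
    have := chainWalk_mul (blk := blky) stepy hn0 h2y s 0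
    rwa [Nat.zero_mul] at this
  refine ⟨N, hN0, fun i => chainWalk n blkx stepx s (N - (i : ℕ)),
    fun i => chainWalk n blky stepy s (N - (i : ℕ)), ?_, ?_, ?_, ?_, ?_, ?_⟩
  · intro i
    have hlt : (i : ℕ) < N := i.isLt
    show (chainWalk n blkx stepx s (N - (i.castSucc : ℕ)),
      chainWalk n blkx stepx s (N - (i.succ : ℕ))) ∈ F
    rw [Fin.coe_castSucc, Fin.val_succ,
      show N - (i : ℕ) = (N - ((i : ℕ) + 1)) + 1 by omega]
    exact chainWalk_rel stepx hn0 h1x h2x h3x s _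
  · intro i
    have hlt : (i : ℕ) < N := i.isLt
    show (chainWalk n blky stepy s (N - (i.castSucc : ℕ)),
      chainWalk n blky stepy s (N - (i.succ : ℕ))) ∈ F
    rw [Fin.coe_castSucc, Fin.val_succ,
      show N - (i : ℕ) = (N - ((i : ℕ) + 1)) + 1 by omega]
    exact chainWalk_rel stepy hn0 h1y h2y h3y s _
  · -- distinctness
    intro heq
    have hkl' : k s ≠ l s := by
      intro h
      exact Set.disjoint_left.mp hdisj (hkK s) (h ▸ hlL s)
    obtain ⟨i₀, hi₀⟩ : ∃ i₀, k s i₀ ≠ l s i₀ := by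
      by_contra h
      push_neg at h
      exact hkl' (funext h)
    have hi₀n : (i₀ : ℕ) ≤ n := Nat.lt_succ_iff.mp i₀.isLt
    have htN : n - (i₀ : ℕ) ≤ N := le_trans (Nat.sub_le _ _)
      (by rw [hN]; exact Nat.le_mul_of_pos_left n hM0)
    have hx_t : chainWalk n blkx stepx s (n - (i₀ : ℕ)) = l s i₀ := by
      rw [chainWalk_le stepx hn0 h2x h3x s _ (Nat.sub_le _ _)]
      have hb : blkx 0 s = l s := by simp [hblkx]
      rw [hb]
      exact congrArg (l s) (Fin.ext (by simp; omega))
    have hy_t : chainWalk n blky stepy s (n - (i₀ : ℕ)) = k s i₀ := by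
      rw [chainWalk_le stepy hn0 h2y h3y s _ (Nat.sub_le _ _)]
      exact congrArg (k s) (Fin.ext (by simp; omega))
    have hC := congrFun heq ⟨N - (n - (i₀ : ℕ)), by omega⟩
    simp only at hC
    rw [show N - (N - (n - (i₀ : ℕ))) = n - (i₀ : ℕ) by omega] at hC
    rw [hx_t, hy_t] at hC
    exact hi₀ hC.symm
  · show chainWalk n blkx stepx s (N - ((0 : Fin (N + 1)) : ℕ))
      = chainWalk n blky stepy s (N - ((0 : Fin (N + 1)) : ℕ))
    rw [Fin.val_zero, Nat.sub_zero, ex0, ey0]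
  · show chainWalk n blkx stepx s (N - ((0 : Fin (N + 1)) : ℕ))
      = chainWalk n blkx stepx s (N - ((Fin.last N : Fin (N + 1)) : ℕ))
    rw [Fin.val_zero, Nat.sub_zero, Fin.val_last, Nat.sub_self, ex0, exN]
  · show chainWalk n blky stepy s (N - ((0 : Fin (N + 1)) : ℕ))
      = chainWalk n blky stepy s (N - ((Fin.last N : Fin (N + 1)) : ℕ))
    rw [Fin.val_zero, Nat.sub_zero, Fin.val_last, Nat.sub_self, ey0, eyN]


/-- A finite relation `F` on a compact metric space is CR-turbulent iff
there are `n ∈ ℕ` and two distinct points `x, y ∈ X_F^n` with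
`x 1 = y 1 = x (n+1) = y (n+1)`. -/
theorem stmt6 {X : Type*} [MetricSpace X] [CompactSpace X] {F : Set (X × X)}
    (hF : F.Finite) :
    CRTurbulent F ↔ ∃ n : ℕ, 1 ≤ n ∧ ∃ x y : Fin (n + 1) → X,
      x ∈ Mahavier F n ∧ y ∈ Mahavier F n ∧ x ≠ y ∧
      x 0 = y 0 ∧ x 0 = x (Fin.last n) ∧ y 0 = y (Fin.last n) := by
  constructor
  · rintro ⟨n, hn, K, L, hKne, hLne, hKc, hLc, hKM, hLM, hdisj, hsub⟩
    exact stmt6_fwd hF hn hKne hLne hKM hLM hdisj hsub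
  · rintro ⟨n, hn, x, y, hx, hy, hxy, h00, hx0, hy0⟩
    refine ⟨n, hn, {x}, {y}, Set.singleton_nonempty _, Set.singleton_nonempty _,
      isClosed_singleton, isClosed_singleton, Set.singleton_subset_iff.mpr hx,
      Set.singleton_subset_iff.mpr hy, Set.disjoint_singleton.mpr hxy, ?_⟩
    simp only [Set.image_singleton]
    rintro z hz
    have hz' : z = x 0 := by
      rcases hz with h | h
      · exact h
      · rw [Set.mem_singleton_iff] at h; rw [h, h00]
    refine ⟨?_, ?_⟩
    · rw [Set.mem_singleton_iff, hz', hx0]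
    · rw [Set.mem_singleton_iff, hz', h00, hy0]
end

section
/- Let X be a compact metric space and F a finite subset of X × X. Then F is CR-turbulent if and only if the infinite Mahavier product X_F^+ is uncountable. -/
open Set

section Aux
variable {X : Type*}

/-- A finite path of length `m` (as a sequence, only indices `≤ m` matter). -/
def IsPathN (F : Set (X × X)) (m : ℕ) (y : ℕ → X) : Prop :=
  ∀ i < m, (y i, y (i + 1)) ∈ F

/-- Two distinct cycles of the same length based at the same point. -/
def Branch (F : Set (X × X)) : Prop :=
  ∃ (m : ℕ) (y z : ℕ → X), 1 ≤ m ∧ IsPathN F m y ∧ IsPathN F m z ∧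
    y 0 = z 0 ∧ y m = y 0 ∧ z m = z 0 ∧ ∃ i ≤ m, y i ≠ z i

lemma glue_eq {n : ℕ} (hn : 1 ≤ n) (W : ℕ → ℕ → X)
    (hbd : ∀ q, W (q + 1) 0 = W q n) (q i : ℕ) (hi : i ≤ n) :
    W ((q * n + i) / n) ((q * n + i) % n) = W q i := by
  rcases lt_or_eq_of_le hi with h | h
  · have h1 : (q * n + i) / n = q := by
      rw [Nat.add_comm, Nat.add_mul_div_right _ _ (by omega : 0 < n),
        Nat.div_eq_of_lt h, Nat.zero_add]
    have h2 : (q * n + i) % n = i := by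
      rw [Nat.add_comm, Nat.add_mul_mod_self_right, Nat.mod_eq_of_lt h]
    rw [h1, h2]
  · rw [h]
    have h1 : q * n + n = (q + 1) * n := by ring
    have h2 : ((q + 1) * n) / n = q + 1 := Nat.mul_div_cancel _ (by omega)
    have h3 : ((q + 1) * n) % n = 0 := Nat.mul_mod_left _ _
    rw [h1, h2, h3, hbd]

lemma glue_mem {F : Set (X × X)} {n : ℕ} (hn : 1 ≤ n) (W : ℕ → ℕ → X)
    (hpath : ∀ q, IsPathN F n (W q)) (hbd : ∀ q, W (q + 1) 0 = W q n) :
    (fun t => W (t / n) (t % n)) ∈ MahavierSeq F := by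
  intro t
  have hr : t % n < n := Nat.mod_lt _ (by omega)
  have ht : t = (t / n) * n + t % n := by
    rw [Nat.mul_comm]; exact (Nat.div_add_mod t n).symm
  have e1 : W (t / n) (t % n) = W (t / n) (t % n) := rfl
  have e2 : W ((t + 1) / n) ((t + 1) % n) = W (t / n) (t % n + 1) := by
    have := glue_eq hn W hbd (t / n) (t % n + 1) hr
    rw [show (t / n) * n + (t % n + 1) = t + 1 by omega] at this
    exact this
  show (W (t / n) (t % n), W ((t + 1) / n) ((t + 1) % n)) ∈ F
  rw [e2]
  exact hpath (t / n) (t % n) hr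

lemma uncountable_of_inj {s : Set (ℕ → X)} (f : (ℕ → Bool) → (ℕ → X))
    (hinj : Function.Injective f) (hmem : ∀ b, f b ∈ s) : ¬ s.Countable := by
  classical
  intro hc
  have hcc : Countable s := hc.to_subtype
  have h2 : Function.Injective (fun b => (⟨f b, hmem b⟩ : s)) :=
    fun a b hab => hinj (congrArg Subtype.val hab)
  have h3 : Countable (ℕ → Bool) := h2.countable
  have hinj2 : Function.Injective (fun s : Set ℕ => fun n => decide (n ∈ s)) := by
    intro s t hst
    ext n
    have := congrFun hst n
    simpa using this
  have : Countable (Set ℕ) := hinj2.countable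
  obtain ⟨g, hg⟩ := this.exists_injective_nat
  exact Function.cantor_injective g hg

end Aux

section Aux2
variable {X : Type*}

lemma branch_uncountable {F : Set (X × X)} (hB : Branch F) :
    ¬ (MahavierSeq F).Countable := by
  classical
  obtain ⟨m, y, z, hm, hy, hz, h0, hym, hzm, i, hi, hne⟩ := hB
  have h0i : i ≠ 0 := fun h => hne (by rw [h]; exact h0)
  have hmi : i ≠ m := fun h => hne (by rw [h, hym, hzm, h0])
  set W : (ℕ → Bool) → ℕ → ℕ → X := fun b q => if b q then y else z with hW
  have hWpath : ∀ b q, IsPathN F m (W b q) := by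
    intro b q
    rw [hW]; dsimp only; split <;> assumption
  have hWbd : ∀ b q, W b (q + 1) 0 = W b q m := by
    intro b q
    rw [hW]; dsimp only
    split <;> split <;> simp [hym, hzm, h0]
  apply uncountable_of_inj (fun b t => W b (t / m) (t % m))
  · intro b b' hbb'
    by_contra hne'
    obtain ⟨q, hq⟩ := Function.ne_iff.mp hne'
    have h1 : W b ((q * m + i) / m) ((q * m + i) % m) = W b q i :=
      glue_eq hm (W b) (hWbd b) q i hi
    have h2 : W b' ((q * m + i) / m) ((q * m + i) % m) = W b' q i :=
      glue_eq hm (W b') (hWbd b') q i hi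
    have h3 := congrFun hbb' (q * m + i)
    dsimp only at h3
    rw [h1, h2] at h3
    rw [hW] at h3
    dsimp only at h3
    rcases Bool.eq_false_or_eq_true (b q) with hb | hb <;>
      rcases Bool.eq_false_or_eq_true (b' q) with hb' | hb' <;>
      rw [hb, hb'] at h3 hq <;> simp at h3 hq <;> [exact hne h3; exact hne h3.symm]
  · intro b
    exact glue_mem hm (W b) (hWpath b) (hWbd b)

lemma branch_crturb [TopologicalSpace X] [T1Space X] {F : Set (X × X)} (hB : Branch F) :
    CRTurbulent F := by
  obtain ⟨m, y, z, hm, hy, hz, h0, hym, hzm, i, hi, hne⟩ := hB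
  refine ⟨m, hm, ?_⟩
  set a : Fin (m + 1) → X := fun j => y j.val with ha
  set b : Fin (m + 1) → X := fun j => z j.val with hb
  have hab : a ≠ b := fun h => hne (congrFun h ⟨i, by omega⟩)
  refine ⟨{a}, {b}, ⟨a, rfl⟩, ⟨b, rfl⟩, isClosed_singleton, isClosed_singleton, ?_, ?_, ?_, ?_⟩
  · rintro x rfl
    intro j
    have := hy j.val j.isLt
    simpa [ha, Fin.coe_castSucc, Fin.val_succ] using this
  · rintro x rfl
    intro j
    have := hz j.val j.isLt
    simpa [hb, Fin.coe_castSucc, Fin.val_succ] using this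
  · simpa [Set.disjoint_singleton_left] using hab
  · have e1 : a 0 = y 0 := rfl
    have e2 : b 0 = z 0 := rfl
    have e3 : a (Fin.last m) = y m := rfl
    have e4 : b (Fin.last m) = z m := rfl
    simp only [Set.image_singleton]
    intro c hc
    have hc' : c = y 0 := by
      rcases hc with hc | hc
      · rw [Set.mem_singleton_iff] at hc; rw [hc, e1]
      · rw [Set.mem_singleton_iff] at hc; rw [hc, e2, h0]
    constructor
    · rw [Set.mem_singleton_iff, hc', e3, hym]
    · rw [Set.mem_singleton_iff, hc', e4, hzm, h0]

end Aux2

section Aux3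
variable {X : Type*}

lemma cyc_edge {F : Set (X × X)} {x : ℕ → X} (hx : x ∈ MahavierSeq F)
    {a e : ℕ} (he : 1 ≤ e) (hxe : x (a + e) = x a) (s : ℕ) :
    (x (a + s % e), x (a + (s + 1) % e)) ∈ F := by
  have hr : s % e < e := Nat.mod_lt _ (by omega)
  have hmod : (s + 1) % e = (s % e + 1) % e := by
    conv_lhs => rw [← Nat.mod_add_div s e]
    rw [show s % e + e * (s / e) + 1 = s % e + 1 + (s / e) * e by ring,
      Nat.add_mul_mod_self_right]
  rcases eq_or_lt_of_le (Nat.succ_le_of_lt hr) with h | h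
  · have h4 : (s % e + 1) % e = 0 := by rw [← Nat.succ_eq_add_one, h, Nat.mod_self]
    have h2 : x (a + 0) = x (a + s % e + 1) := by
      rw [Nat.add_zero, ← hxe, show a + e = a + s % e + 1 by omega]
    rw [hmod, h4, h2]
    exact hx (a + s % e)
  · rw [hmod, Nat.mod_eq_of_lt h, show a + (s % e + 1) = a + s % e + 1 by omega]
    exact hx (a + s % e)

lemma not_branch_countable {F : Set (X × X)} (hF : F.Finite) (hnb : ¬ Branch F) :
    (MahavierSeq F).Countable := by
  classical
  set S : Set X := Prod.fst '' F ∪ Prod.snd '' F with hS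
  have hSfin : S.Finite := (hF.image _).union (hF.image _)
  have hmemS : ∀ x ∈ MahavierSeq F, ∀ i, x i ∈ S := fun x hx i => Or.inl ⟨_, hx i, rfl⟩
  have huniq : ∀ (m : ℕ) (y z : ℕ → X), 1 ≤ m → IsPathN F m y → IsPathN F m z →
      y 0 = z 0 → y m = y 0 → z m = z 0 → ∀ i ≤ m, y i = z i := by
    intro m y z h1 h2 h3 h4 h5 h6 i hi
    by_contra hne
    exact hnb ⟨m, y, z, h1, h2, h3, h4, h5, h6, i, hi, hne⟩
  have hper : ∀ x ∈ MahavierSeq F, ∃ a d, 1 ≤ d ∧ ∀ t, a ≤ t → x (t + d) = x t := by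
    intro x hx
    obtain ⟨v, hv⟩ : ∃ v, {i : ℕ | x i = v}.Infinite := by
      by_contra hfin
      push_neg at hfin
      have hcov : (Set.univ : Set ℕ) ⊆ ⋃ v ∈ S, {i : ℕ | x i = v} := by
        intro i _
        exact Set.mem_biUnion (hmemS x hx i) rfl
      exact Set.infinite_univ
        ((hSfin.biUnion fun v _ => (hfin v)).subset hcov)
    obtain ⟨a, ha⟩ := hv.nonempty
    obtain ⟨a', ha', haa'⟩ := hv.exists_gt a
    set d := a' - a with hd
    have hd1 : 1 ≤ d := by omega
    have hxa : x a = v := ha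
    have hxad : x (a + d) = x a := by
      rw [show a + d = a' by omega]
      rw [Set.mem_setOf_eq] at ha'
      rw [ha', hxa]
    have hkey : ∀ t, x (a + t) = x (a + t % d) := by
      intro t
      obtain ⟨j, hjm, hjt⟩ := hv.exists_gt (a + t)
      set D := j - a with hD
      have hD1 : 1 ≤ D := by omega
      have htD : t < D := by omega
      have hxD : x (a + D) = x a := by
        rw [show a + D = j by omega]
        rw [Set.mem_setOf_eq] at hjm
        rw [hjm, hxa]
      have hYp : IsPathN F (d * D) (fun s => x (a + s % D)) :=
        fun s _ => cyc_edge hx hD1 hxD s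
      have hZp : IsPathN F (d * D) (fun s => x (a + s % d)) :=
        fun s _ => cyc_edge hx hd1 hxad s
      have hdD1 : 1 ≤ d * D := Nat.one_le_iff_ne_zero.mpr (by positivity)
      have hYe : (fun s => x (a + s % D)) (d * D) = (fun s => x (a + s % D)) 0 := by
        show x (a + (d * D) % D) = x (a + 0 % D)
        rw [Nat.mul_mod_left, Nat.zero_mod]
      have hZe : (fun s => x (a + s % d)) (d * D) = (fun s => x (a + s % d)) 0 := by
        show x (a + (d * D) % d) = x (a + 0 % d)
        rw [Nat.mul_mod_right, Nat.zero_mod]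
      have h00 : (fun s => x (a + s % D)) 0 = (fun s => x (a + s % d)) 0 := by
        simp
      have := huniq (d * D) _ _ hdD1 hYp hZp h00 hYe hZe t
        (le_trans (le_of_lt htD) (Nat.le_mul_of_pos_left _ (by omega)))
      rw [show t % D = t from Nat.mod_eq_of_lt htD] at this
      exact this
    refine ⟨a, d, hd1, fun t ht => ?_⟩
    have h1 := hkey (t - a + d)
    have h2 := hkey (t - a)
    rw [show a + (t - a + d) = t + d by omega] at h1
    rw [show a + (t - a) = t by omega] at h2
    rw [h1, Nat.add_mod_right, ← h2]
  have hsub : MahavierSeq F ⊆ ⋃ (a : ℕ), ⋃ (d : ℕ),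
      {x : ℕ → X | (∀ i, x i ∈ S) ∧ ∀ t, a ≤ t → x (t + (d + 1)) = x t} := by
    intro x hx
    obtain ⟨a, d, hd, hp⟩ := hper x hx
    refine Set.mem_iUnion.mpr ⟨a, Set.mem_iUnion.mpr ⟨d - 1, hmemS x hx, ?_⟩⟩
    intro t ht
    rw [show d - 1 + 1 = d by omega]
    exact hp t ht
  refine Set.Countable.mono hsub ?_
  refine Set.countable_iUnion fun a => Set.countable_iUnion fun d => ?_
  set E : Set (ℕ → X) :=
    {x : ℕ → X | (∀ i, x i ∈ S) ∧ ∀ t, a ≤ t → x (t + (d + 1)) = x t} with hE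
  haveI : Countable S := hSfin.countable.to_subtype
  have hdet : ∀ x ∈ E, ∀ y ∈ E, (∀ i < a + d + 1, x i = y i) → x = y := by
    intro x hx y hy hagree
    funext t
    induction t using Nat.strong_induction_on with
    | _ t ih =>
      by_cases ht : t < a + d + 1
      · exact hagree t ht
      · push_neg at ht
        have h1 : a ≤ t - (d + 1) := by omega
        have hx1 := hx.2 (t - (d + 1)) h1
        have hy1 := hy.2 (t - (d + 1)) h1
        rw [show t - (d + 1) + (d + 1) = t by omega] at hx1 hy1
        rw [hx1, hy1, ih (t - (d + 1)) (by omega)]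
  have hinj : Function.Injective
      (fun x : E => fun i : Fin (a + d + 1) => (⟨x.1 i.val, x.2.1 i.val⟩ : S)) := by
    intro x y hxy
    apply Subtype.ext
    apply hdet _ x.2 _ y.2
    intro i hi
    have := congrFun hxy ⟨i, hi⟩
    exact congrArg Subtype.val this
  exact Set.countable_coe_iff.mp hinj.countable

end Aux3

section Aux4
variable {X : Type*}

lemma branch_swap {F : Set (X × X)} (hB : Branch (Prod.swap ⁻¹' F)) : Branch F := by
  obtain ⟨m, y, z, hm, hy, hz, h0, hym, hzm, i, hi, hne⟩ := hB
  have hedge : ∀ (w : ℕ → X), IsPathN (Prod.swap ⁻¹' F) m w →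
      IsPathN F m (fun t => w (m - t)) := by
    intro w hw j hj
    have h1 := hw (m - j - 1) (by omega)
    rw [Set.mem_preimage] at h1
    have h2 : (w (m - j - 1 + 1), w (m - j - 1)) ∈ F := h1
    rw [show m - j - 1 + 1 = m - j by omega] at h2
    show (w (m - j), w (m - (j + 1))) ∈ F
    rw [show m - (j + 1) = m - j - 1 by omega]
    exact h2
  refine ⟨m, fun t => y (m - t), fun t => z (m - t), hm, hedge y hy, hedge z hz, ?_, ?_, ?_,
    m - i, by omega, ?_⟩
  · show y (m - 0) = z (m - 0)
    rw [Nat.sub_zero, hym, hzm, h0]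
  · show y (m - m) = y (m - 0)
    rw [Nat.sub_zero, Nat.sub_self, hym]
  · show z (m - m) = z (m - 0)
    rw [Nat.sub_zero, Nat.sub_self, hzm]
  · show y (m - (m - i)) ≠ z (m - (m - i))
    rw [show m - (m - i) = i by omega]
    exact hne

lemma crw_rev [TopologicalSpace X] {F : Set (X × X)} {n : ℕ} (h : CRWitness F n) :
    RevCRWitness (Prod.swap ⁻¹' F) n := by
  obtain ⟨K, L, hKne, hLne, hKc, hLc, hKM, hLM, hdisj, hproj⟩ := h
  set r : (Fin (n + 1) → X) → (Fin (n + 1) → X) := fun x i => x i.rev with hr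
  have hcont : Continuous r := continuous_pi fun i => continuous_apply _
  have hrr : ∀ x, r (r x) = x := by
    intro x; funext i; show x i.rev.rev = x i; rw [Fin.rev_rev]
  have hlast : ∀ (A : Set (Fin (n + 1) → X)),
      (fun x => x (Fin.last n)) '' (r ⁻¹' A) = (fun y => y 0) '' A := by
    intro A
    ext c
    constructor
    · rintro ⟨x, hx, rfl⟩
      refine ⟨r x, hx, ?_⟩
      show x (Fin.rev 0) = x (Fin.last n)
      rw [Fin.rev_zero]
    · rintro ⟨y, hy, rfl⟩
      refine ⟨r y, by rw [Set.mem_preimage, hrr]; exact hy, ?_⟩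
      show y (Fin.rev (Fin.last n)) = y 0
      rw [Fin.rev_last]
  have hzero : ∀ (A : Set (Fin (n + 1) → X)),
      (fun x => x 0) '' (r ⁻¹' A) = (fun y => y (Fin.last n)) '' A := by
    intro A
    ext c
    constructor
    · rintro ⟨x, hx, rfl⟩
      refine ⟨r x, hx, ?_⟩
      show x (Fin.rev (Fin.last n)) = x 0
      rw [Fin.rev_last]
    · rintro ⟨y, hy, rfl⟩
      refine ⟨r y, by rw [Set.mem_preimage, hrr]; exact hy, ?_⟩
      show y (Fin.rev 0) = y (Fin.last n)
      rw [Fin.rev_zero]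
  have hmah : ∀ (A : Set (Fin (n + 1) → X)), A ⊆ Mahavier F n →
      r ⁻¹' A ⊆ Mahavier (Prod.swap ⁻¹' F) n := by
    intro A hA x hx i
    have hy := hA hx i.rev
    rw [Set.mem_preimage]
    have e1 : (Fin.castSucc i.rev).rev = i.succ := by
      ext
      simp only [Fin.val_rev, Fin.coe_castSucc, Fin.val_succ]
      omega
    have e2 : (Fin.succ i.rev).rev = i.castSucc := by
      ext
      simp only [Fin.val_rev, Fin.coe_castSucc, Fin.val_succ]
      omega
    show (x i.succ, x i.castSucc) ∈ F
    have hh : (x (Fin.castSucc i.rev).rev, x (Fin.succ i.rev).rev) ∈ F := hy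
    rw [e1, e2] at hh
    exact hh
  refine ⟨r ⁻¹' K, r ⁻¹' L, ?_, ?_, hKc.preimage hcont, hLc.preimage hcont,
    hmah K hKM, hmah L hLM, hdisj.preimage r, ?_⟩
  · obtain ⟨k, hk⟩ := hKne
    exact ⟨r k, by rw [Set.mem_preimage, hrr]; exact hk⟩
  · obtain ⟨l, hl⟩ := hLne
    exact ⟨r l, by rw [Set.mem_preimage, hrr]; exact hl⟩
  · rw [hlast K, hlast L, hzero K, hzero L]
    exact hproj

end Aux4

section Aux5
variable {X : Type*}

lemma rev_witness_uncountable [TopologicalSpace X] {F : Set (X × X)} {n : ℕ}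
    (hn : 1 ≤ n) (h : RevCRWitness F n) : ¬ (MahavierSeq F).Countable := by
  classical
  obtain ⟨K, L, ⟨x₀, hx₀⟩, hLne, _, _, hKM, hLM, hdisj, hproj⟩ := h
  have hsucc : ∀ w ∈ K ∪ L,
      (∃ k ∈ K, k 0 = w (Fin.last n)) ∧ (∃ l ∈ L, l 0 = w (Fin.last n)) := by
    intro w hw
    have hm : w (Fin.last n) ∈ ((fun x => x 0) '' K ∩ (fun x => x 0) '' L) := by
      apply hproj
      rcases hw with hw | hw
      · exact Or.inl ⟨w, hw, rfl⟩
      · exact Or.inr ⟨w, hw, rfl⟩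
    obtain ⟨⟨k, hk, hk0⟩, ⟨l, hl, hl0⟩⟩ := hm
    exact ⟨⟨k, hk, hk0⟩, ⟨l, hl, hl0⟩⟩
  set next : Bool → (Fin (n + 1) → X) → (Fin (n + 1) → X) := fun s w =>
    if hex : ∃ k ∈ (bif s then K else L), k 0 = w (Fin.last n) then hex.choose else w
    with hnext
  have hnext_spec : ∀ (s : Bool), ∀ w ∈ K ∪ L,
      next s w ∈ (bif s then K else L) ∧ (next s w) 0 = w (Fin.last n) := by
    intro s w hw
    have hex : ∃ k ∈ (bif s then K else L), k 0 = w (Fin.last n) := by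
      cases s
      · exact (hsucc w hw).2
      · exact (hsucc w hw).1
    rw [hnext]
    simp only [dif_pos hex]
    exact hex.choose_spec
  set B : (ℕ → Bool) → ℕ → (Fin (n + 1) → X) := fun b q =>
    Nat.rec x₀ (fun p prev => next (b p) prev) q with hB
  have hB0 : ∀ b, B b 0 = x₀ := fun b => rfl
  have hBs : ∀ b q, B b (q + 1) = next (b q) (B b q) := fun b q => rfl
  have hInv : ∀ b q, B b q ∈ K ∪ L := by
    intro b q
    induction q with
    | zero => rw [hB0]; exact Or.inl hx₀
    | succ q ih =>
      rw [hBs]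
      have hspec := (hnext_spec (b q) (B b q) ih).1
      cases hbq : b q
      · rw [hbq] at hspec; exact Or.inr hspec
      · rw [hbq] at hspec; exact Or.inl hspec
  have hBin : ∀ b q, B b (q + 1) ∈ (bif b q then K else L) :=
    fun b q => (hnext_spec (b q) (B b q) (hInv b q)).1
  have hbdB : ∀ b q, B b (q + 1) 0 = B b q (Fin.last n) := by
    intro b q
    rw [hBs]
    exact (hnext_spec (b q) (B b q) (hInv b q)).2
  have hMah : ∀ b q, B b q ∈ Mahavier F n :=
    fun b q => (hInv b q).elim (fun hh => hKM hh) (fun hh => hLM hh)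
  set W : (ℕ → Bool) → ℕ → ℕ → X := fun b q i =>
    B b q ⟨min i n, Nat.lt_succ_of_le (min_le_right i n)⟩ with hWdef
  have hWeq : ∀ b q (j : Fin (n + 1)), W b q j.val = B b q j := by
    intro b q j
    have hjn : j.val ≤ n := Nat.lt_succ_iff.mp j.isLt
    show B b q ⟨min j.val n, Nat.lt_succ_of_le (min_le_right j.val n)⟩ = B b q j
    congr 1
    exact Fin.ext (by simp [Nat.min_eq_left hjn])
  have hWpath : ∀ b q, IsPathN F n (W b q) := by
    intro b q i hi
    have hedge := hMah b q ⟨i, hi⟩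
    have e1 : W b q i = B b q (Fin.castSucc ⟨i, hi⟩) := by
      rw [← hWeq b q (Fin.castSucc ⟨i, hi⟩)]
      congr 1
    have e2 : W b q (i + 1) = B b q (Fin.succ ⟨i, hi⟩) := by
      rw [← hWeq b q (Fin.succ ⟨i, hi⟩)]
      congr 1
    rw [e1, e2]
    exact hedge
  have hWbd : ∀ b q, W b (q + 1) 0 = W b q n := by
    intro b q
    have e1 : W b (q + 1) 0 = B b (q + 1) (0 : Fin (n + 1)) := hWeq b (q + 1) 0
    have e2 : W b q n = B b q (Fin.last n) := hWeq b q (Fin.last n)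
    rw [e1, e2]
    exact hbdB b q
  apply uncountable_of_inj (fun b t => W b (t / n) (t % n))
  · intro b b' hbb'
    by_contra hne'
    obtain ⟨q, hqne⟩ : ∃ q, b q ≠ b' q := Function.ne_iff.mp hne'
    have hu : B b (q + 1) ∈ (bif b q then K else L) := hBin b q
    have hu' : B b' (q + 1) ∈ (bif b' q then K else L) := hBin b' q
    have hune : B b (q + 1) ≠ B b' (q + 1) := by
      cases hb1 : b q <;> cases hb2 : b' q <;> rw [hb1] at hu hqne <;>
        rw [hb2] at hu' hqne <;>
        simp only [Bool.cond_false, Bool.cond_true] at hu hu'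
      · exact absurd rfl hqne
      · intro he
        exact Set.disjoint_left.mp hdisj (by rw [he]; exact hu') hu
      · intro he
        exact Set.disjoint_left.mp hdisj hu (by rw [he]; exact hu')
      · exact absurd rfl hqne
    obtain ⟨j, hj⟩ := Function.ne_iff.mp hune
    have hjn : j.val ≤ n := Nat.lt_succ_iff.mp j.isLt
    have h1 := glue_eq hn (W b) (hWbd b) (q + 1) j.val hjn
    have h2 := glue_eq hn (W b') (hWbd b') (q + 1) j.val hjn
    have h3 := congrFun hbb' ((q + 1) * n + j.val)
    dsimp only at h3
    rw [h1, h2] at h3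
    rw [hWeq b (q + 1) j, hWeq b' (q + 1) j] at h3
    exact hj h3
  · intro b
    exact glue_mem hn (W b) (hWpath b) (hWbd b)

end Aux5


/-- A finite relation `F` on a compact metric space is CR-turbulent iff the
infinite Mahavier product `X_F^+` is uncountable. -/
theorem stmt8 {X : Type*} [MetricSpace X] [CompactSpace X] {F : Set (X × X)}
    (hF : F.Finite) :
    CRTurbulent F ↔ ¬ (MahavierSeq F).Countable := by
  constructor
  · rintro ⟨n, hn, hW⟩
    have h1 := crw_rev hW
    have h2 : ¬ (MahavierSeq (Prod.swap ⁻¹' F)).Countable :=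
      rev_witness_uncountable hn h1
    have hFs : (Prod.swap ⁻¹' F : Set (X × X)).Finite :=
      hF.preimage Prod.swap_injective.injOn
    have h3 : Branch (Prod.swap ⁻¹' F) := by
      by_contra hc
      exact h2 (not_branch_countable hFs hc)
    exact branch_uncountable (branch_swap h3)
  · intro h
    have hb : Branch F := by
      by_contra hnb
      exact h (not_branch_countable hF hnb)
    exact branch_crturb hb
end

section
/- Let X be a compact metric space, G ⊆ X × X a closed relation, and a, b ∈ X with a ≠ b such that: (1) whenever (x,a) ∈ G then x = a; (2) whenever (b,x) ∈ G then x = b; and (3) whenever (s,u) ∈ G and (t,u) ∈ G with s ≠ t, then {s,t,u} ∩ {a,b} ≠ ∅. Then G is not CR-turbulent. -/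
open Set

/-!
By (1) a chain of `G` that reaches `a` has been at `a` all along, and by (2) a chain that
visits `b` stays there. If two distinct chains end at the same point, then at the last place
where they differ two edges of `G` merge, and (3) forces one chain to start at `a` or the common
endpoint to be `b`. For a turbulence witness `K, L` no chain can start at `a`: `a` would be the
endpoint of chains in both `K` and `L`, which then coincide as the constant chain `a`. Hence every
common endpoint is `b`, so chains of `K` and of `L` start at `b` and again coincide, now as the
constant chain `b`.
-/

theorem Fin.exists_castSucc_ne_and_succ_eq {α : Type*} {n : ℕ} {p q : Fin (n + 1) → α}
    (hpq : p ≠ q) (hlast : p (Fin.last n) = q (Fin.last n)) :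
    ∃ i : Fin n, p i.castSucc ≠ q i.castSucc ∧ p i.succ = q i.succ := by
  by_contra h
  exact hpq <| funext <| Fin.reverseInduction hlast fun i hi => by_contra fun hne => h ⟨i, hne, hi⟩

section

variable {X : Type*} {G : Set (X × X)} {a b : X}

theorem eq_or_eq_or_eq_of_mem_of_mem_of_ne (h1 : ∀ x, (x, a) ∈ G → x = a)
    (h2 : ∀ x, (b, x) ∈ G → x = b)
    (h3 : ∀ s t u, (s, u) ∈ G → (t, u) ∈ G → s ≠ t → ({s, t, u} : Set X) ∩ {a, b} ≠ ∅)
    {s t u : X} (hs : (s, u) ∈ G) (ht : (t, u) ∈ G) (hst : s ≠ t) :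
    s = a ∨ t = a ∨ u = b := by
  obtain ⟨c, hc, hcab⟩ := nonempty_iff_ne_empty.mpr (h3 s t u hs ht hst)
  rcases hcab with rfl | rfl <;> rcases hc with rfl | rfl | rfl
  · exact .inl rfl
  · exact .inr (.inl rfl)
  · exact .inl (h1 s hs)
  · exact .inr (.inr (h2 u hs))
  · exact .inr (.inr (h2 u ht))
  · exact .inr (.inr rfl)

namespace Mahavier

variable {n : ℕ} {p q : Fin (n + 1) → X}

theorem apply_eq_of_le (h2 : ∀ x, (b, x) ∈ G → x = b) (hp : p ∈ Mahavier G n)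
    {j : Fin (n + 1)} (hj : p j = b) : ∀ i, j ≤ i → p i = b := by
  refine Fin.induction (fun hj0 => ?_) (fun i ih hji => ?_)
  · rwa [← nonpos_iff_eq_zero.mp hj0]
  · rcases hji.eq_or_lt with rfl | hji
    · exact hj
    · exact h2 _ (ih (Fin.le_castSucc_iff.mpr hji) ▸ hp i)

theorem apply_eq_of_ge (h1 : ∀ x, (x, a) ∈ G → x = a) (hp : p ∈ Mahavier G n)
    {j : Fin (n + 1)} (hj : p j = a) : ∀ i, i ≤ j → p i = a := by
  refine Fin.reverseInduction (fun hj' => ?_) (fun i ih hij => ?_)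
  · rwa [← Fin.last_le_iff.mp hj']
  · rcases hij.eq_or_lt with rfl | hij
    · exact hj
    · exact h1 _ (ih (Fin.castSucc_lt_iff_succ_le.mp hij) ▸ hp i)

theorem last_eq_or_head_eq_of_ne (h1 : ∀ x, (x, a) ∈ G → x = a)
    (h2 : ∀ x, (b, x) ∈ G → x = b)
    (h3 : ∀ s t u, (s, u) ∈ G → (t, u) ∈ G → s ≠ t → ({s, t, u} : Set X) ∩ {a, b} ≠ ∅)
    (hp : p ∈ Mahavier G n) (hq : q ∈ Mahavier G n) (hpq : p ≠ q)
    (hlast : p (Fin.last n) = q (Fin.last n)) :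
    p (Fin.last n) = b ∨ p 0 = a ∨ q 0 = a := by
  obtain ⟨i, hne, hsucc⟩ := Fin.exists_castSucc_ne_and_succ_eq hpq hlast
  have hqi := hq i
  rw [← hsucc] at hqi
  rcases eq_or_eq_or_eq_of_mem_of_mem_of_ne h1 h2 h3 (hp i) hqi hne with h | h | h
  · exact .inr (.inl (apply_eq_of_ge h1 hp h 0 (Fin.zero_le _)))
  · exact .inr (.inr (apply_eq_of_ge h1 hq h 0 (Fin.zero_le _)))
  · exact .inl (apply_eq_of_le h2 hp h _ (Fin.le_last _))

variable {K L : Set (Fin (n + 1) → X)}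

theorem notMem_last_image_inter (h1 : ∀ x, (x, a) ∈ G → x = a) (hK : K ⊆ Mahavier G n)
    (hL : L ⊆ Mahavier G n) (hKL : Disjoint K L) :
    a ∉ (fun x => x (Fin.last n)) '' K ∩ (fun x => x (Fin.last n)) '' L := by
  rintro ⟨⟨p, hp, hpa⟩, ⟨q, hq, hqa⟩⟩
  refine hKL.ne_of_mem hp hq (funext fun i => ?_)
  rw [apply_eq_of_ge h1 (hK hp) hpa i (Fin.le_last i),
    apply_eq_of_ge h1 (hL hq) hqa i (Fin.le_last i)]

theorem notMem_head_image_inter (h2 : ∀ x, (b, x) ∈ G → x = b) (hK : K ⊆ Mahavier G n)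
    (hL : L ⊆ Mahavier G n) (hKL : Disjoint K L) :
    b ∉ (fun x => x 0) '' K ∩ (fun x => x 0) '' L := by
  rintro ⟨⟨p, hp, hpb⟩, ⟨q, hq, hqb⟩⟩
  refine hKL.ne_of_mem hp hq (funext fun i => ?_)
  rw [apply_eq_of_le h2 (hK hp) hpb i (Fin.zero_le i),
    apply_eq_of_le h2 (hL hq) hqb i (Fin.zero_le i)]

end Mahavier

end

theorem stmt9_general {X : Type*} [MetricSpace X] {G : Set (X × X)}
    (a b : X)
    (h1 : ∀ x, (x, a) ∈ G → x = a)
    (h2 : ∀ x, (b, x) ∈ G → x = b)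
    (h3 : ∀ s t u, (s, u) ∈ G → (t, u) ∈ G → s ≠ t →
      ({s, t, u} : Set X) ∩ {a, b} ≠ ∅) :
    ¬ CRTurbulent G := by
  rintro ⟨n, -, K, L, ⟨k, hk⟩, ⟨l, hl⟩, -, -, hK, hL, hKL, hsub⟩
  have ha : a ∉ (fun x => x 0) '' K ∪ (fun x => x 0) '' L := fun h =>
    Mahavier.notMem_last_image_inter h1 hK hL hKL (hsub h)
  have hb : ∀ x ∈ (fun x => x (Fin.last n)) '' K ∩ (fun x => x (Fin.last n)) '' L, x = b := by
    rintro x ⟨⟨p, hp, rfl⟩, ⟨q, hq, hqp⟩⟩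
    rcases Mahavier.last_eq_or_head_eq_of_ne h1 h2 h3 (hK hp) (hL hq) (hKL.ne_of_mem hp hq)
      hqp.symm with h | h | h
    · exact h
    · exact absurd (.inl ⟨p, hp, h⟩) ha
    · exact absurd (.inr ⟨q, hq, h⟩) ha
  exact Mahavier.notMem_head_image_inter h2 hK hL hKL
    ⟨⟨k, hk, hb _ (hsub (.inl ⟨k, hk, rfl⟩))⟩, ⟨l, hl, hb _ (hsub (.inr ⟨l, hl, rfl⟩))⟩⟩

/-- If `G` is a closed relation on a compact metric space `X` and `a ≠ b`
are points of `X` such that (1) `(x,a) ∈ G → x = a`, (2) `(b,x) ∈ G → x = b`, and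
(3) `(s,u), (t,u) ∈ G` with `s ≠ t` implies `{s,t,u} ∩ {a,b} ≠ ∅`, then `G` is not
CR-turbulent. -/
theorem stmt9 {X : Type*} [MetricSpace X] [CompactSpace X] {G : Set (X × X)}
    (hG : IsClosed G) (a b : X) (hab : a ≠ b)
    (h1 : ∀ x, (x, a) ∈ G → x = a)
    (h2 : ∀ x, (b, x) ∈ G → x = b)
    (h3 : ∀ s t u, (s, u) ∈ G → (t, u) ∈ G → s ≠ t →
      ({s, t, u} : Set X) ∩ {a, b} ≠ ∅) :
    ¬ CRTurbulent G :=
  stmt9_general a b h1 h2 h3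
end

section
/- There exists a closed subset F of [0,1] × [0,1] such that π_1(F) = π_2(F) = [0,1], the topological entropy of the shift map σ_F^+ : X_F^+ → X_F^+ is strictly positive, and F is neither CR-turbulent nor reverse CR-turbulent. -/
open Set

namespace S11

noncomputable section

def dec (n : ℕ) : ℤ := if n % 2 = 0 then (n / 2 : ℤ) else -(((n / 2 : ℕ) : ℤ) + 1)

def enc (k : ℤ) : ℕ := if 0 ≤ k then 2 * k.toNat else 2 * (-k - 1).toNat + 1

lemma dec_enc (k : ℤ) : dec (enc k) = k := by
  unfold dec enc
  by_cases h : 0 ≤ k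
  · simp only [h, if_true]
    have h1 : (2 * k.toNat) % 2 = 0 := by omega
    simp only [h1, if_true]
    have h2 : ((2 * k.toNat : ℕ) : ℤ) = 2 * (k.toNat : ℤ) := by push_cast; ring
    rw [h2, Int.mul_ediv_cancel_left _ (by norm_num)]
    omega
  · simp only [h, if_false]
    have hc : ¬((2 * (-k - 1).toNat + 1) % 2 = 0) := by omega
    rw [if_neg hc]
    have h2 : (2 * (-k - 1).toNat + 1) / 2 = (-k - 1).toNat := by omega
    rw [h2]
    omega

lemma dec_zero : dec 0 = 0 := by norm_num [dec]

def dig (b : Bool) : ℝ := if b then 1 else 0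

lemma dig_mem (b : Bool) : dig b = 0 ∨ dig b = 1 := by cases b <;> simp [dig]

lemma dig_inj {a b : Bool} (h : dig a = dig b) : a = b := by
  cases a <;> cases b <;> simp_all [dig]

lemma summable_geom1 : Summable (fun n : ℕ => (1/3:ℝ)^(n+1)) :=
  ((summable_geometric_of_lt_one (by norm_num) (by norm_num : (1/3:ℝ) < 1)).mul_left (1/3)).congr
    (fun n => by ring)

lemma summable_aux {u : ℕ → ℝ} (hu : ∀ n, u n = 0 ∨ u n = 1) :
    Summable (fun n => u n * (1/3:ℝ)^(n+1)) := by
  apply Summable.of_nonneg_of_le (fun n => ?_) (fun n => ?_) summable_geom1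
  · rcases hu n with h | h
    · rw [h, zero_mul]
    · rw [h, one_mul]; positivity
  · rcases hu n with h | h
    · rw [h, zero_mul]; positivity
    · rw [h, one_mul]

lemma geom_val : ∑' n : ℕ, (1/3:ℝ)^(n+1) = 1/2 := by
  have h : ∀ n : ℕ, (1/3:ℝ)^(n+1) = (1/3) * (1/3)^n := fun n => by ring
  rw [tsum_congr h, tsum_mul_left, tsum_geometric_of_lt_one (by norm_num) (by norm_num)]
  norm_num

def dsum (u : ℕ → ℝ) : ℝ := ∑' n, u n * (1/3:ℝ)^(n+1)

lemma dsum_nonneg {u : ℕ → ℝ} (hu : ∀ n, u n = 0 ∨ u n = 1) : 0 ≤ dsum u := by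
  apply tsum_nonneg
  intro n
  rcases hu n with h | h
  · rw [h, zero_mul]
  · rw [h, one_mul]; positivity

lemma dsum_le_half {u : ℕ → ℝ} (hu : ∀ n, u n = 0 ∨ u n = 1) : dsum u ≤ 1/2 := by
  rw [← geom_val]
  refine Summable.tsum_le_tsum (fun n => ?_) (summable_aux hu) summable_geom1
  rcases hu n with h | h
  · rw [h, zero_mul]; positivity
  · rw [h, one_mul]

lemma dsum_sep {u v : ℕ → ℝ} (hu : ∀ n, u n = 0 ∨ u n = 1) (hv : ∀ n, v n = 0 ∨ v n = 1)
    {N : ℕ} (hN : u N ≠ v N) (hlt : ∀ m < N, u m = v m) :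
    (1/3:ℝ)^(N+1) / 2 ≤ |dsum u - dsum v| := by
  have hsu := summable_aux hu
  have hsv := summable_aux hv
  set f : ℕ → ℝ := fun n => (u n - v n) * (1/3:ℝ)^(n+1) with hf_def
  have hf : Summable f := (hsu.sub hsv).congr (fun n => by simp only [hf_def]; ring)
  have hd : dsum u - dsum v = ∑' n, f n := by
    rw [dsum, dsum, ← Summable.tsum_sub hsu hsv]
    exact tsum_congr fun n => by simp only [hf_def]; ring
  have hsplit : ∑ i ∈ Finset.range (N+1), f i + ∑' i, f (i + (N+1)) = ∑' i, f i :=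
    Summable.sum_add_tsum_nat_add (N+1) hf
  have hhead : ∑ i ∈ Finset.range (N+1), f i = f N := by
    apply Finset.sum_eq_single_of_mem N (Finset.self_mem_range_succ N)
    intro i hi hne
    have hiN : i < N := by simp at hi; omega
    simp only [hf_def, hlt i hiN, sub_self, zero_mul]
  have habsN : |f N| = (1/3:ℝ)^(N+1) := by
    rcases hu N with h1 | h1 <;> rcases hv N with h2 | h2
    · exact absurd (h1.trans h2.symm) hN
    · have : f N = -((1/3:ℝ)^(N+1)) := by simp only [hf_def, h1, h2]; ring
      rw [this, abs_neg, abs_of_nonneg (by positivity)]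
    · have : f N = (1/3:ℝ)^(N+1) := by simp only [hf_def, h1, h2]; ring
      rw [this, abs_of_nonneg (by positivity)]
    · exact absurd (h1.trans h2.symm) hN
  have hgs : Summable (fun i : ℕ => (1/3:ℝ)^(N+1+i+1)) :=
    ((summable_geometric_of_lt_one (by norm_num) (by norm_num : (1/3:ℝ) < 1)).mul_left
      ((1/3)^(N+2))).congr (fun i => by ring)
  have hfs : Summable fun i => f (i + (N+1)) := hf.comp_injective (add_left_injective (N+1))
  have h1 : ∀ i : ℕ, |f (i + (N+1))| ≤ (1/3:ℝ)^(N+1+i+1) := by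
    intro i
    have hb : |u (i+(N+1)) - v (i+(N+1))| ≤ 1 := by
      rcases hu (i+(N+1)) with h | h <;> rcases hv (i+(N+1)) with h' | h' <;>
        rw [h, h'] <;> norm_num
    have e1 : |f (i+(N+1))| = |u (i+(N+1)) - v (i+(N+1))| * (1/3:ℝ)^(i+(N+1)+1) := by
      simp only [hf_def]
      rw [abs_mul, abs_of_nonneg (pow_nonneg (by norm_num : (0:ℝ) ≤ 1/3) (i+(N+1)+1))]
    rw [e1]
    calc |u (i+(N+1)) - v (i+(N+1))| * (1/3:ℝ)^(i+(N+1)+1)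
        ≤ 1 * (1/3:ℝ)^(i+(N+1)+1) := mul_le_mul_of_nonneg_right hb (by positivity)
      _ = (1/3:ℝ)^(N+1+i+1) := by rw [one_mul]; ring_nf
  have htail : |∑' i, f (i + (N+1))| ≤ (1/3:ℝ)^(N+1) / 2 := by
    calc |∑' i, f (i + (N+1))| ≤ ∑' i, |f (i + (N+1))| := by
          have := norm_tsum_le_tsum_norm (f := fun i => f (i + (N+1))) (hfs.abs.congr
            (fun i => (Real.norm_eq_abs _).symm))
          simpa [Real.norm_eq_abs] using this
      _ ≤ ∑' i : ℕ, (1/3:ℝ)^(N+1+i+1) := Summable.tsum_le_tsum h1 hfs.abs hgs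
      _ = (1/3:ℝ)^(N+1) / 2 := by
          have h2 : ∀ i : ℕ, (1/3:ℝ)^(N+1+i+1) = ((1/3:ℝ)^(N+2)) * (1/3)^i := fun i => by ring
          rw [tsum_congr h2, tsum_mul_left, tsum_geometric_of_lt_one (by norm_num) (by norm_num)]
          ring
  have htri := abs_sub_abs_le_abs_sub (f N) (-(∑' i, f (i + (N+1))))
  rw [abs_neg, sub_neg_eq_add] at htri
  calc (1/3:ℝ)^(N+1)/2 = (1/3:ℝ)^(N+1) - (1/3:ℝ)^(N+1)/2 := by ring
    _ ≤ |f N| - |∑' i, f (i + (N+1))| := by rw [habsN]; linarith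
    _ ≤ |f N + ∑' i, f (i + (N+1))| := htri
    _ = |dsum u - dsum v| := by rw [hd, ← hsplit, hhead]


/-- shift on two-sided binary sequences -/
def sh (w : ℤ → Bool) : ℤ → Bool := fun k => w (k + 1)

lemma sh_inj : Function.Injective sh := by
  intro w w' h
  funext j
  have := congrFun h (j - 1)
  simpa [sh] using this

/-- the embedding of the two-sided shift into `[0,1/2]` -/
def e (w : ℤ → Bool) : ℝ := dsum (fun n => dig (w (dec n)))

lemma e_digs (w : ℤ → Bool) : ∀ n, dig (w (dec n)) = 0 ∨ dig (w (dec n)) = 1 :=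
  fun n => dig_mem _

lemma e_mem (w : ℤ → Bool) : e w ∈ Icc (0:ℝ) (1/2) :=
  ⟨dsum_nonneg (e_digs w), dsum_le_half (e_digs w)⟩

lemma e_inj : Function.Injective e := by
  intro w w' h
  by_contra hne
  have hex : ∃ n : ℕ, dig (w (dec n)) ≠ dig (w' (dec n)) := by
    have : ∃ k : ℤ, w k ≠ w' k := by
      by_contra hk
      push_neg at hk
      exact hne (funext hk)
    obtain ⟨k, hk⟩ := this
    exact ⟨enc k, by rw [dec_enc]; exact fun hd => hk (dig_inj hd)⟩
  set N := Nat.find hex with hN_def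
  have h1 := Nat.find_spec hex
  have h2 : ∀ m < N, dig (w (dec m)) = dig (w' (dec m)) := by
    intro m hm
    by_contra hmm
    exact absurd (Nat.find_min hex hm) (by simp [hmm])
  have hsep := dsum_sep (e_digs w) (e_digs w') h1 h2
  have heq : dsum (fun n => dig (w (dec n))) = dsum (fun n => dig (w' (dec n))) := h
  rw [heq, sub_self, abs_zero] at hsep
  have hpos : (0:ℝ) < (1/3)^(N+1)/2 := by positivity
  linarith

lemma e_sep {w w' : ℤ → Bool} (h : w 0 ≠ w' 0) : 1/6 ≤ |e w - e w'| := by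
  have h0 : dig (w (dec 0)) ≠ dig (w' (dec 0)) := by
    rw [dec_zero]
    exact fun hd => h (dig_inj hd)
  have := dsum_sep (e_digs w) (e_digs w') h0 (fun m hm => absurd hm (Nat.not_lt_zero m))
  norm_num at this
  exact this

lemma e_cont : Continuous e := by
  apply continuous_tsum (fun n => ?_) summable_geom1 (fun n x => ?_)
  · exact (continuous_of_discreteTopology (f := dig)).comp (continuous_apply (dec n)) |>.mul
      continuous_const
  · have hb : |dig (x (dec n))| ≤ 1 := by
      rcases dig_mem (x (dec n)) with h | h <;> rw [h] <;> norm_num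
    rw [Real.norm_eq_abs, abs_mul, abs_of_nonneg (pow_nonneg (by norm_num : (0:ℝ) ≤ 1/3) _)]
    exact mul_le_of_le_one_left (pow_nonneg (by norm_num : (0:ℝ) ≤ 1/3) _) hb

def C : Set ℝ := Set.range e

def G : Set (ℝ × ℝ) := Set.range (fun w => (e w, e (sh w)))

lemma C_compact : IsCompact C := isCompact_range e_cont

lemma C_closed : IsClosed C := C_compact.isClosed

lemma C_ne : C.Nonempty := ⟨e (fun _ => false), Set.mem_range_self _⟩

lemma C_sub : C ⊆ Icc (0:ℝ) (1/2) := by rintro x ⟨w, rfl⟩; exact e_mem w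

lemma zero_mem_C : (0:ℝ) ∈ C := by
  refine ⟨fun _ => false, ?_⟩
  show dsum _ = 0
  rw [dsum]
  convert tsum_zero with n
  simp [dig]

lemma half_mem_C : (1/2:ℝ) ∈ C := by
  refine ⟨fun _ => true, ?_⟩
  show dsum _ = 1/2
  rw [dsum, ← geom_val]
  exact tsum_congr fun n => by simp [dig]

lemma G_compact : IsCompact G := by
  apply isCompact_range
  apply Continuous.prodMk e_cont
  exact e_cont.comp (continuous_pi fun k => continuous_apply (k + 1))

lemma G_closed : IsClosed G := G_compact.isClosed

lemma G_ne : G.Nonempty := ⟨_, Set.mem_range_self (fun _ => false)⟩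

/-- the Lyapunov function -/
def phi (x : ℝ) : ℝ := 2 * Metric.infDist x C

lemma phi_cont : Continuous phi := continuous_const.mul (Metric.continuous_infDist_pt C)

lemma phi_nonneg (x : ℝ) : 0 ≤ phi x := by
  have := Metric.infDist_nonneg (s := C) (x := x)
  rw [phi]; linarith

lemma phi_zero_iff {x : ℝ} : phi x = 0 ↔ x ∈ C := by
  rw [phi]
  constructor
  · intro h
    have : Metric.infDist x C = 0 := by linarith
    exact (C_closed.mem_iff_infDist_zero C_ne).2 this
  · intro h
    rw [Metric.infDist_zero_of_mem h]
    ring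

lemma phi_le_one {x : ℝ} (hx : x ∈ Icc (0:ℝ) 1) : phi x ≤ 1 := by
  have h := Metric.infDist_le_dist_of_mem half_mem_C (x := x)
  have : dist x (1/2:ℝ) ≤ 1/2 := by
    rw [Real.dist_eq, abs_le]
    constructor <;> linarith [hx.1, hx.2]
  rw [phi]; linarith

lemma phi_eq_one {x : ℝ} (hx : x ∈ Icc (0:ℝ) 1) (h : phi x = 1) : x = 1 := by
  have h0 := Metric.infDist_le_dist_of_mem zero_mem_C (x := x)
  have hh := Metric.infDist_le_dist_of_mem half_mem_C (x := x)
  rw [phi] at h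
  rw [Real.dist_eq, sub_zero] at h0
  rw [Real.dist_eq] at hh
  rw [abs_of_nonneg hx.1] at h0
  have hx2 : (1:ℝ)/2 ≤ x := by linarith
  rw [abs_of_nonneg (by linarith : (0:ℝ) ≤ x - 1/2)] at hh
  have : (1:ℝ) ≤ x := by linarith
  linarith [hx.2]

lemma infDist_right {x : ℝ} (hx : (1:ℝ)/2 ≤ x) : Metric.infDist x C = x - 1/2 := by
  apply le_antisymm
  · have := Metric.infDist_le_dist_of_mem half_mem_C (x := x)
    rw [Real.dist_eq, abs_of_nonneg (by linarith)] at this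
    exact this
  · by_contra hlt
    push_neg at hlt
    obtain ⟨y, hyC, hyd⟩ := (Metric.infDist_lt_iff C_ne).1 hlt
    have hy2 := (C_sub hyC).2
    rw [Real.dist_eq] at hyd
    have h5 : x - y ≤ |x - y| := le_abs_self _
    linarith

lemma phi_one : phi 1 = 1 := by
  rw [phi, infDist_right (by norm_num)]
  norm_num

/-- the allowed level-drop function -/
def psi (c : ℝ) : ℝ := max (c/2) (2*c - 1)

lemma psi_cont : Continuous psi := by
  apply Continuous.max <;> continuity

lemma psi_le {c : ℝ} (h0 : 0 ≤ c) (h1 : c ≤ 1) : psi c ≤ c := by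
  apply max_le <;> linarith

lemma psi_zero : psi 0 = 0 := by norm_num [psi]

/-- the relation: the shift graph together with a strictly Lyapunov-decreasing filler -/
def Fs : Set (ℝ × ℝ) :=
  {p : ℝ × ℝ | p.1 ∈ Icc (0:ℝ) 1 ∧ p.2 ∈ Icc (0:ℝ) 1 ∧ phi p.2 ≤ psi (phi p.1) ∧
    Metric.infDist p G ≤ 4 * phi p.1}

lemma Fs_closed : IsClosed Fs := by
  have h1 : IsClosed {p : ℝ × ℝ | p.1 ∈ Icc (0:ℝ) 1} :=
    isClosed_Icc.preimage continuous_fst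
  have h2 : IsClosed {p : ℝ × ℝ | p.2 ∈ Icc (0:ℝ) 1} :=
    isClosed_Icc.preimage continuous_snd
  have h3 : IsClosed {p : ℝ × ℝ | phi p.2 ≤ psi (phi p.1)} :=
    isClosed_le (phi_cont.comp continuous_snd) (psi_cont.comp (phi_cont.comp continuous_fst))
  have h4 : IsClosed {p : ℝ × ℝ | Metric.infDist p G ≤ 4 * phi p.1} :=
    isClosed_le (Metric.continuous_infDist_pt G) (continuous_const.mul (phi_cont.comp continuous_fst))
  exact h1.inter (h2.inter (h3.inter h4))

lemma Fs_sub : Fs ⊆ Icc (0:ℝ) 1 ×ˢ Icc (0:ℝ) 1 := fun p hp => ⟨hp.1, hp.2.1⟩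

lemma G_sub_Fs : ∀ w, (e w, e (sh w)) ∈ Fs := by
  intro w
  have h1 : phi (e w) = 0 := phi_zero_iff.2 ⟨w, rfl⟩
  have h2 : phi (e (sh w)) = 0 := phi_zero_iff.2 ⟨sh w, rfl⟩
  refine ⟨?_, ?_, ?_, ?_⟩
  · exact Icc_subset_Icc (le_refl _) (by norm_num) (e_mem w)
  · exact Icc_subset_Icc (le_refl _) (by norm_num) (e_mem (sh w))
  · rw [h1, h2, psi_zero]
  · have hmem : (e w, e (sh w)) ∈ G := ⟨w, rfl⟩
    rw [Metric.infDist_zero_of_mem hmem, h1]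
    norm_num

lemma Fs_lyap {p : ℝ × ℝ} (hp : p ∈ Fs) : phi p.2 ≤ phi p.1 :=
  hp.2.2.1.trans (psi_le (phi_nonneg _) (phi_le_one hp.1))

/-- pairs in `Fs` with equal Lyapunov level lie in `G` or equal `(1,1)` -/
lemma Fs_level {p : ℝ × ℝ} (hp : p ∈ Fs) (heq : phi p.1 = phi p.2) :
    p ∈ G ∨ p = (1, 1) := by
  set c := phi p.1 with hc
  have hc0 : 0 ≤ c := phi_nonneg _
  have hc1 : c ≤ 1 := phi_le_one hp.1
  have hcases : c = 0 ∨ c = 1 := by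
    have hle : c ≤ psi c := by
      have h := hp.2.2.1
      rw [← heq, ← hc] at h
      exact h
    rcases le_max_iff.1 hle with h | h
    · left; linarith
    · right; linarith
  rcases hcases with h0 | h1
  · left
    have : Metric.infDist p G ≤ 0 := by
      have := hp.2.2.2
      rw [← hc, h0] at this
      linarith
    have hz : Metric.infDist p G = 0 := le_antisymm this Metric.infDist_nonneg
    exact (G_closed.mem_iff_infDist_zero G_ne).2 hz
  · right
    have hp1 : p.1 = 1 := phi_eq_one hp.1 (by rw [← hc]; exact h1)
    have hp2 : p.2 = 1 := phi_eq_one hp.2.1 (by rw [← heq]; exact h1)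
    exact Prod.ext hp1 hp2


lemma e_false : e (fun _ => false) = 0 := by
  show dsum _ = 0
  rw [dsum]
  convert tsum_zero with n
  simp [dig]

lemma Fs_proj1 : Prod.fst '' Fs = Icc (0:ℝ) 1 := by
  apply le_antisymm
  · rintro x ⟨p, hp, rfl⟩
    exact hp.1
  · intro x hx
    obtain ⟨p, hpC, hpd⟩ := C_compact.exists_infDist_eq_dist C_ne x
    obtain ⟨w, rfl⟩ := hpC
    refine ⟨(x, e (sh w)), ⟨hx, ?_, ?_, ?_⟩, rfl⟩
    · exact Icc_subset_Icc (le_refl _) (by norm_num) (e_mem (sh w))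
    · rw [phi_zero_iff.2 ⟨sh w, rfl⟩]
      exact le_trans (div_nonneg (phi_nonneg x) (by norm_num)) (le_max_left (phi x / 2) (2 * phi x - 1))
    · have hmem : (e w, e (sh w)) ∈ G := ⟨w, rfl⟩
      have h1 : Metric.infDist (x, e (sh w)) G ≤ dist (x, e (sh w)) (e w, e (sh w)) :=
        Metric.infDist_le_dist_of_mem hmem
      have h2 : dist (x, e (sh w)) (e w, e (sh w)) = dist x (e w) := by
        rw [Prod.dist_eq]
        simp [dist_nonneg]
      rw [h2, ← hpd] at h1
      have : phi x = 2 * Metric.infDist x C := rfl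
      linarith [Metric.infDist_nonneg (s := C) (x := x)]

lemma Fs_proj2 : Prod.snd '' Fs = Icc (0:ℝ) 1 := by
  apply le_antisymm
  · rintro y ⟨p, hp, rfl⟩
    exact hp.2.1
  · intro y hy
    have hy0 : 0 ≤ phi y := phi_nonneg y
    have hy1 : phi y ≤ 1 := phi_le_one hy
    set x : ℝ := 1/2 + (phi y + 1)/4 with hx_def
    have hx : x ∈ Icc (0:ℝ) 1 := by constructor <;> simp [hx_def] <;> linarith
    have hphix : phi x = (phi y + 1)/2 := by
      rw [phi, infDist_right (by simp [hx_def]; linarith)]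
      rw [hx_def]; ring
    refine ⟨(x, y), ⟨hx, hy, ?_, ?_⟩, rfl⟩
    · refine le_trans ?_ (le_max_right (phi x / 2) (2 * phi x - 1))
      rw [hphix]; linarith
    · have hmem : ((0:ℝ), (0:ℝ)) ∈ G :=
        ⟨fun _ => false, Prod.ext e_false e_false⟩
      have h1 : Metric.infDist (x, y) G ≤ dist (x, y) ((0:ℝ), (0:ℝ)) :=
        Metric.infDist_le_dist_of_mem hmem
      have h2 : dist (x, y) ((0:ℝ), (0:ℝ)) ≤ 1 := by
        rw [Prod.dist_eq]
        apply max_le <;> rw [Real.dist_eq, sub_zero, abs_of_nonneg] <;>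
          first
            | exact hx.2
            | exact hx.1
            | exact hy.2
            | exact hy.1
      rw [hphix]
      linarith


section NoTurb

variable {F : Set (ℝ × ℝ)} {φ : ℝ → ℝ}

lemma mah_coords (hF : F ⊆ Icc (0:ℝ) 1 ×ˢ Icc (0:ℝ) 1) {n : ℕ} (hn : 1 ≤ n)
    {x : Fin (n+1) → ℝ} (hx : x ∈ Mahavier F n) : ∀ i, x i ∈ Icc (0:ℝ) 1 := by
  intro i
  rcases lt_or_eq_of_le (Nat.lt_succ_iff.mp i.isLt) with hi | hi
  · have h := hx ⟨i.val, hi⟩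
    have hc : (⟨i.val, hi⟩ : Fin n).castSucc = i := by
      apply Fin.ext; simp
    rw [hc] at h
    exact (hF h).1
  · have hn' : n - 1 < n := by omega
    have h := hx ⟨n-1, hn'⟩
    have hs : (⟨n-1, hn'⟩ : Fin n).succ = i := by
      apply Fin.ext; simp; omega
    rw [hs] at h
    exact (hF h).2

lemma mah_anti (hlyap : ∀ p ∈ F, φ p.2 ≤ φ p.1) {n : ℕ} {x : Fin (n+1) → ℝ}
    (hx : x ∈ Mahavier F n) : ∀ (b : ℕ) (hb : b < n+1) (a : ℕ) (ha : a < n+1), a ≤ b →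
    φ (x ⟨b, hb⟩) ≤ φ (x ⟨a, ha⟩) := by
  intro b
  induction b with
  | zero =>
    intro hb a ha hab
    have : a = 0 := Nat.le_zero.mp hab
    subst this
    exact le_refl _
  | succ m ih =>
    intro hb a ha hab
    rcases Nat.lt_or_ge a (m+1) with h | h
    · have hm : m < n+1 := by omega
      have hmn : m < n := by omega
      have hp := hx ⟨m, hmn⟩
      have h1 : (⟨m, hmn⟩ : Fin n).castSucc = ⟨m, hm⟩ := by apply Fin.ext; simp
      have h2 : (⟨m, hmn⟩ : Fin n).succ = ⟨m+1, hb⟩ := by apply Fin.ext; simp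
      rw [h1, h2] at hp
      exact (hlyap _ hp).trans (ih hm a ha (by omega))
    · have : a = m+1 := by omega
      subst this
      exact le_refl _

lemma mah_anti' (hlyap : ∀ p ∈ F, φ p.2 ≤ φ p.1) {n : ℕ} {x : Fin (n+1) → ℝ}
    (hx : x ∈ Mahavier F n) {i j : Fin (n+1)} (hij : i ≤ j) : φ (x j) ≤ φ (x i) :=
  mah_anti hlyap hx j.val j.isLt i.val i.isLt hij

lemma mah_compact (hF : F ⊆ Icc (0:ℝ) 1 ×ˢ Icc (0:ℝ) 1) {n : ℕ} (hn : 1 ≤ n)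
    {K : Set (Fin (n+1) → ℝ)} (hKc : IsClosed K) (hKM : K ⊆ Mahavier F n) : IsCompact K := by
  have hsub : K ⊆ Set.pi univ (fun _ : Fin (n+1) => Icc (0:ℝ) 1) := by
    intro x hx i _
    exact mah_coords hF hn (hKM hx) i
  exact IsCompact.of_isClosed_subset (isCompact_univ_pi (fun _ => isCompact_Icc)) hKc hsub

/-- key contradiction: two fully-level-`M` paths with the same endpoint agree -/
lemma paths_eq_of_last (hinj : ∀ p ∈ F, ∀ q ∈ F, φ p.1 = φ p.2 → φ q.1 = φ q.2 → φ p.1 = φ q.1 →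
      ((p.1 = q.1 → p.2 = q.2) ∧ (p.2 = q.2 → p.1 = q.1)))
    {n : ℕ} {M : ℝ} {k l : Fin (n+1) → ℝ} (hk : k ∈ Mahavier F n) (hl : l ∈ Mahavier F n)
    (hkl : ∀ i, φ (k i) = M) (hll : ∀ i, φ (l i) = M)
    (hlast : k (Fin.last n) = l (Fin.last n)) : k = l := by
  have hback : ∀ m : ℕ, m ≤ n → ∀ (h : n - m < n + 1), k ⟨n - m, h⟩ = l ⟨n - m, h⟩ := by
    intro m
    induction m with
    | zero =>
      intro _ h
      have he : (⟨n - 0, h⟩ : Fin (n+1)) = Fin.last n := by apply Fin.ext; simp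
      rw [he]
      exact hlast
    | succ m ih =>
      intro hm h
      have hjn : n - (m+1) < n := by omega
      have hp := hk ⟨n - (m+1), hjn⟩
      have hq := hl ⟨n - (m+1), hjn⟩
      have hsucc : (⟨n - (m+1), hjn⟩ : Fin n).succ = ⟨n - m, by omega⟩ := by
        apply Fin.ext; simp; omega
      have hcast : (⟨n - (m+1), hjn⟩ : Fin n).castSucc = ⟨n - (m+1), h⟩ := by
        apply Fin.ext; simp
      rw [hsucc, hcast] at hp hq
      have hih : k ⟨n - m, by omega⟩ = l ⟨n - m, by omega⟩ := ih (by omega) (by omega)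
      have := (hinj _ hp _ hq (by rw [hkl, hkl]) (by rw [hll, hll]) (by rw [hkl, hll])).2 hih
      exact this
  funext i
  have h1 : n - (n - i.val) < n + 1 := by omega
  have h2 := hback (n - i.val) (by omega) h1
  have he : (⟨n - (n - i.val), h1⟩ : Fin (n+1)) = i := by apply Fin.ext; simp; omega
  rw [he] at h2
  exact h2

/-- two fully-level paths with the same start agree -/
lemma paths_eq_of_first (hinj : ∀ p ∈ F, ∀ q ∈ F, φ p.1 = φ p.2 → φ q.1 = φ q.2 → φ p.1 = φ q.1 →
      ((p.1 = q.1 → p.2 = q.2) ∧ (p.2 = q.2 → p.1 = q.1)))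
    {n : ℕ} {M : ℝ} {k l : Fin (n+1) → ℝ} (hk : k ∈ Mahavier F n) (hl : l ∈ Mahavier F n)
    (hkl : ∀ i, φ (k i) = M) (hll : ∀ i, φ (l i) = M)
    (hfirst : k 0 = l 0) : k = l := by
  have hfwd : ∀ m : ℕ, ∀ (h : m < n + 1), k ⟨m, h⟩ = l ⟨m, h⟩ := by
    intro m
    induction m with
    | zero =>
      intro h
      have he : (⟨0, h⟩ : Fin (n+1)) = 0 := by apply Fin.ext; simp
      rw [he]
      exact hfirst
    | succ m ih =>
      intro h
      have hmn : m < n := by omega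
      have hp := hk ⟨m, hmn⟩
      have hq := hl ⟨m, hmn⟩
      have hsucc : (⟨m, hmn⟩ : Fin n).succ = ⟨m+1, h⟩ := by apply Fin.ext; simp
      have hcast : (⟨m, hmn⟩ : Fin n).castSucc = ⟨m, by omega⟩ := by apply Fin.ext; simp
      rw [hsucc, hcast] at hp hq
      have hih : k ⟨m, by omega⟩ = l ⟨m, by omega⟩ := ih (by omega)
      exact (hinj _ hp _ hq (by rw [hkl, hkl]) (by rw [hll, hll]) (by rw [hkl, hll])).1 hih
  funext i
  have h2 := hfwd i.val i.isLt
  have he : (⟨i.val, i.isLt⟩ : Fin (n+1)) = i := by apply Fin.ext; simp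
  rw [he] at h2
  exact h2

lemma no_cr (hF : F ⊆ Icc (0:ℝ) 1 ×ˢ Icc (0:ℝ) 1) (hφ : Continuous φ)
    (hlyap : ∀ p ∈ F, φ p.2 ≤ φ p.1)
    (hinj : ∀ p ∈ F, ∀ q ∈ F, φ p.1 = φ p.2 → φ q.1 = φ q.2 → φ p.1 = φ q.1 →
      ((p.1 = q.1 → p.2 = q.2) ∧ (p.2 = q.2 → p.1 = q.1)))
    {n : ℕ} (hn : 1 ≤ n) : ¬ CRWitness F n := by
  rintro ⟨K, L, hKne, hLne, hKc, hLc, hKM, hLM, hdisj, hsub⟩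
  have hKcomp := mah_compact hF hn hKc hKM
  have hLcomp := mah_compact hF hn hLc hLM
  have hScomp : IsCompact (K ∪ L) := hKcomp.union hLcomp
  have hSne : (K ∪ L).Nonempty := hKne.mono subset_union_left
  obtain ⟨k₀, hk₀, hmax⟩ := hScomp.exists_isMaxOn hSne
    ((hφ.comp (continuous_apply (0 : Fin (n+1)))).continuousOn)
  set M := φ (k₀ 0) with hM_def
  have ha₀ : k₀ 0 ∈ ((fun x => x 0) '' K ∪ (fun x => x 0) '' L) := by
    rcases hk₀ with h | h
    · exact Or.inl ⟨k₀, h, rfl⟩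
    · exact Or.inr ⟨k₀, h, rfl⟩
  obtain ⟨⟨k', hk'K, hk'e⟩, ⟨l', hl'L, hl'e⟩⟩ := hsub ha₀
  have hlev : ∀ z, z ∈ Mahavier F n → z ∈ K ∪ L → z (Fin.last n) = k₀ 0 →
      ∀ i, φ (z i) = M := by
    intro z hzM hzS hze i
    have h1 : φ (z 0) ≤ M := hmax hzS
    have h3 : φ (z i) ≤ φ (z 0) := mah_anti' hlyap hzM (Fin.zero_le i)
    have h4 : φ (z (Fin.last n)) ≤ φ (z i) := mah_anti' hlyap hzM (Fin.le_last i)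
    rw [hze, ← hM_def] at h4
    exact le_antisymm (h3.trans h1) h4
  have hk'lev := hlev k' (hKM hk'K) (Or.inl hk'K) hk'e
  have hl'lev := hlev l' (hLM hl'L) (Or.inr hl'L) hl'e
  have hkl : k' = l' := paths_eq_of_last hinj (hKM hk'K) (hLM hl'L) hk'lev hl'lev
    (hk'e.trans hl'e.symm)
  exact (Set.disjoint_left.mp hdisj hk'K) (hkl ▸ hl'L)

lemma no_rev (hF : F ⊆ Icc (0:ℝ) 1 ×ˢ Icc (0:ℝ) 1) (hφ : Continuous φ)
    (hlyap : ∀ p ∈ F, φ p.2 ≤ φ p.1)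
    (hinj : ∀ p ∈ F, ∀ q ∈ F, φ p.1 = φ p.2 → φ q.1 = φ q.2 → φ p.1 = φ q.1 →
      ((p.1 = q.1 → p.2 = q.2) ∧ (p.2 = q.2 → p.1 = q.1)))
    {n : ℕ} (hn : 1 ≤ n) : ¬ RevCRWitness F n := by
  rintro ⟨K, L, hKne, hLne, hKc, hLc, hKM, hLM, hdisj, hsub⟩
  have hKcomp := mah_compact hF hn hKc hKM
  have hLcomp := mah_compact hF hn hLc hLM
  have hScomp : IsCompact (K ∪ L) := hKcomp.union hLcomp
  have hSne : (K ∪ L).Nonempty := hKne.mono subset_union_left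
  obtain ⟨k₀, hk₀, hmin⟩ := hScomp.exists_isMinOn hSne
    ((hφ.comp (continuous_apply (0 : Fin (n+1)))).continuousOn)
  set m₀ := φ (k₀ 0) with hm_def
  have hb : k₀ (Fin.last n) ∈ ((fun x => x (Fin.last n)) '' K ∪ (fun x => x (Fin.last n)) '' L) := by
    rcases hk₀ with h | h
    · exact Or.inl ⟨k₀, h, rfl⟩
    · exact Or.inr ⟨k₀, h, rfl⟩
  obtain ⟨⟨k', hk'K, hk'e⟩, ⟨l', hl'L, hl'e⟩⟩ := hsub hb
  -- φ (k₀ last) = m₀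
  have hble : φ (k₀ (Fin.last n)) ≤ m₀ := by
    rcases hk₀ with h | h
    · exact mah_anti' hlyap (hKM h) (Fin.zero_le _)
    · exact mah_anti' hlyap (hLM h) (Fin.zero_le _)
  have hbge : m₀ ≤ φ (k₀ (Fin.last n)) := by
    have h := hmin (Or.inl hk'K : k' ∈ K ∪ L)
    exact le_of_le_of_eq h (congrArg φ hk'e)
  have hbm : φ (k₀ (Fin.last n)) = m₀ := le_antisymm hble hbge
  have hlev : ∀ z, z ∈ Mahavier F n → z ∈ K ∪ L → z 0 = k₀ (Fin.last n) →
      ∀ i, φ (z i) = m₀ := by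
    intro z hzM hzS hze i
    have h1 : φ (z 0) = m₀ := by rw [hze]; exact hbm
    have h3 : φ (z i) ≤ φ (z 0) := mah_anti' hlyap hzM (Fin.zero_le i)
    have h4 : φ (z (Fin.last n)) ≤ φ (z i) := mah_anti' hlyap hzM (Fin.le_last i)
    -- z last ∈ π_last(K ∪ L) ⊆ π₀ K ∩ π₀ L; via hsub, get min bound
    have hzlast : z (Fin.last n) ∈
        ((fun x => x (Fin.last n)) '' K ∪ (fun x => x (Fin.last n)) '' L) := by
      rcases hzS with h | h
      · exact Or.inl ⟨z, h, rfl⟩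
      · exact Or.inr ⟨z, h, rfl⟩
    obtain ⟨⟨z', hz'K, hz'e⟩, _⟩ := hsub hzlast
    have h5 : m₀ ≤ φ (z (Fin.last n)) := by
      have h := hmin (Or.inl hz'K : z' ∈ K ∪ L)
      exact le_of_le_of_eq h (congrArg φ hz'e)
    exact le_antisymm (h3.trans_eq h1) (h5.trans h4)
  have hk'lev := hlev k' (hKM hk'K) (Or.inl hk'K) hk'e
  have hl'lev := hlev l' (hLM hl'L) (Or.inr hl'L) hl'e
  have hkl : k' = l' := paths_eq_of_first hinj (hKM hk'K) (hLM hl'L) hk'lev hl'lev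
    (hk'e.trans hl'e.symm)
  exact (Set.disjoint_left.mp hdisj hk'K) (hkl ▸ hl'L)

end NoTurb


lemma phi_G_fst {w : ℤ → Bool} : phi (e w) = 0 := phi_zero_iff.2 ⟨w, rfl⟩

lemma Fs_inj : ∀ p ∈ Fs, ∀ q ∈ Fs, phi p.1 = phi p.2 → phi q.1 = phi q.2 → phi p.1 = phi q.1 →
    ((p.1 = q.1 → p.2 = q.2) ∧ (p.2 = q.2 → p.1 = q.1)) := by
  intro p hp q hq hpl hql hpq
  rcases Fs_level hp hpl with hpG | hp1 <;> rcases Fs_level hq hql with hqG | hq1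
  · obtain ⟨w, hw⟩ := hpG
    obtain ⟨w', hw'⟩ := hqG
    subst hw
    subst hw'
    constructor
    · intro h1
      have hww : w = w' := e_inj h1
      rw [hww]
    · intro h2
      have hww : w = w' := sh_inj (e_inj h2)
      rw [hww]
  · exfalso
    obtain ⟨w, hw⟩ := hpG
    subst hw
    subst hq1
    have h1 : phi (e w) = 0 := phi_G_fst
    have h2 : phi (1:ℝ) = 1 := phi_one
    rw [h1] at hpq
    have : phi ((1:ℝ), (1:ℝ)).1 = phi (1:ℝ) := rfl
    rw [this, h2] at hpq
    norm_num at hpq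
  · exfalso
    obtain ⟨w, hw⟩ := hqG
    subst hw
    subst hp1
    have h1 : phi (e w) = 0 := phi_G_fst
    have h2 : phi (1:ℝ) = 1 := phi_one
    rw [h1] at hpq
    have : phi ((1:ℝ), (1:ℝ)).1 = phi (1:ℝ) := rfl
    rw [this, h2] at hpq
    norm_num at hpq
  · subst hp1
    subst hq1
    exact ⟨fun _ => rfl, fun _ => rfl⟩

lemma Fs_not_CR : ¬ CRTurbulent Fs := by
  rintro ⟨n, hn, hw⟩
  exact no_cr Fs_sub phi_cont (fun p hp => Fs_lyap hp) Fs_inj hn hw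

lemma Fs_not_Rev : ¬ RevCRTurbulent Fs := by
  rintro ⟨n, hn, hw⟩
  exact no_rev Fs_sub phi_cont (fun p hp => Fs_lyap hp) Fs_inj hn hw


section Entropy

open Dynamics
open scoped ENNReal

lemma shift_iterate (k : ℕ) (x : MahavierSeq Fs) (m : ℕ) :
    (((shiftMap Fs)^[k]) x).1 m = x.1 (m + k) := by
  induction k generalizing x with
  | zero => rfl
  | succ k ih =>
    rw [Function.iterate_succ_apply]
    rw [ih (shiftMap Fs x)]
    show x.1 (m + k + 1) = x.1 (m + (k + 1))
    rfl

def Wa (a : ℕ → Bool) : ℤ → Bool := fun k => if 0 ≤ k then a k.toNat else false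

def wseq (a : ℕ → Bool) (i : ℕ) : ℤ → Bool := fun k => Wa a (k + i)

lemma wseq_zero_digit (a : ℕ → Bool) (i : ℕ) : wseq a i 0 = a i := by
  simp [wseq, Wa]

lemma wseq_succ (a : ℕ → Bool) (i : ℕ) : sh (wseq a i) = wseq a (i + 1) := by
  funext k
  show Wa a (k + 1 + i) = Wa a (k + (i + 1))
  congr 1
  omega

def ya (a : ℕ → Bool) : ℕ → ℝ := fun i => e (wseq a i)

lemma ya_mem (a : ℕ → Bool) : ya a ∈ MahavierSeq Fs := by
  intro i
  have h := G_sub_Fs (wseq a i)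
  rw [wseq_succ] at h
  exact h

def Y (a : ℕ → Bool) : MahavierSeq Fs := ⟨ya a, ya_mem a⟩

lemma Y_sep {a b : ℕ → Bool} {i : ℕ} (h : a i ≠ b i) : 1/6 ≤ |ya a i - ya b i| :=
  e_sep (by rw [wseq_zero_digit, wseq_zero_digit]; exact h)

/-- the separating entourage -/
def U0 : Set (MahavierSeq Fs × MahavierSeq Fs) :=
  {p | dist (p.1.1 0) (p.2.1 0) < 1/12}

lemma U0_mem : U0 ∈ uniformity (MahavierSeq Fs) := by
  have h1 : {q : ℝ × ℝ | dist q.1 q.2 < 1/12} ∈ uniformity ℝ :=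
    Metric.dist_mem_uniformity (by norm_num)
  have h2 : UniformContinuous (fun x : MahavierSeq Fs => x.1 0) :=
    (Pi.uniformContinuous_proj _ 0).comp uniformContinuous_subtype_val
  exact h2 h1

lemma U0_symm : SetRel.IsSymm U0 := by
  constructor
  intro x y h
  show dist (y.1 0) (x.1 0) < 1/12
  rw [dist_comm]; exact h

noncomputable local instance : DecidableEq (MahavierSeq Fs) := Classical.decEq _

def emb (n : ℕ) (a : Fin n → Bool) : ℕ → Bool := fun m => if h : m < n then a ⟨m, h⟩ else false

lemma emb_coord (n : ℕ) (a : Fin n → Bool) (i : Fin n) : emb n a i.val = a i := by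
  simp [emb, i.isLt]

lemma Y_inj (n : ℕ) : Function.Injective (fun a : Fin n → Bool => Y (emb n a)) := by
  intro a b hab
  by_contra hne
  have hex : ∃ i : Fin n, a i ≠ b i := by
    by_contra h
    push_neg at h
    exact hne (funext h)
  obtain ⟨i, hi⟩ := hex
  have hYe : ya (emb n a) i.val = ya (emb n b) i.val :=
    congrFun (congrArg Subtype.val hab) i.val
  have hs := Y_sep (a := emb n a) (b := emb n b) (i := i.val)
    (by rw [emb_coord, emb_coord]; exact hi)
  rw [hYe, sub_self, abs_zero] at hs
  linarith

lemma dynnet (n : ℕ) : IsDynNetIn (shiftMap Fs) Set.univ U0 n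
    (↑(Finset.image (fun a : Fin n → Bool => Y (emb n a)) Finset.univ)) := by
  constructor
  · exact Set.subset_univ _
  · intro x hx y hy hxy
    obtain ⟨a, -, rfl⟩ := Finset.mem_image.1 (Finset.mem_coe.1 hx)
    obtain ⟨b, -, rfl⟩ := Finset.mem_image.1 (Finset.mem_coe.1 hy)
    have hab : a ≠ b := fun h => hxy (by rw [h])
    have hex : ∃ i : Fin n, a i ≠ b i := by
      by_contra h
      push_neg at h
      exact hab (funext h)
    obtain ⟨i, hi⟩ := hex
    apply Set.disjoint_left.2
    intro z hz1 hz2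
    have h1 : ∀ k < n, ((shiftMap Fs)^[k] (Y (emb n a)), (shiftMap Fs)^[k] z) ∈ U0 :=
      mem_dynEntourage.1 hz1
    have h2 : ∀ k < n, ((shiftMap Fs)^[k] (Y (emb n b)), (shiftMap Fs)^[k] z) ∈ U0 :=
      mem_dynEntourage.1 hz2
    have ha : dist (((shiftMap Fs)^[i.val] (Y (emb n a))).1 0) (((shiftMap Fs)^[i.val] z).1 0)
        < 1/12 := h1 i.val i.isLt
    have hb : dist (((shiftMap Fs)^[i.val] (Y (emb n b))).1 0) (((shiftMap Fs)^[i.val] z).1 0)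
        < 1/12 := h2 i.val i.isLt
    rw [shift_iterate, shift_iterate] at ha hb
    have hya : (Y (emb n a)).1 (0 + i.val) = ya (emb n a) i.val := by
      show ya (emb n a) (0 + i.val) = ya (emb n a) i.val
      congr 1
      omega
    have hyb : (Y (emb n b)).1 (0 + i.val) = ya (emb n b) i.val := by
      show ya (emb n b) (0 + i.val) = ya (emb n b) i.val
      congr 1
      omega
    rw [hya] at ha
    rw [hyb] at hb
    have hsep := Y_sep (a := emb n a) (b := emb n b) (i := i.val)
      (by rw [emb_coord, emb_coord]; exact hi)
    rw [Real.dist_eq] at ha hb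
    have htri : |ya (emb n a) i.val - ya (emb n b) i.val| < 1/6 := by
      have := abs_sub_abs_le_abs_sub (ya (emb n a) i.val - z.1 (0 + i.val))
        (ya (emb n b) i.val - z.1 (0 + i.val))
      have h3 := abs_sub (ya (emb n a) i.val - z.1 (0 + i.val))
        (ya (emb n b) i.val - z.1 (0 + i.val))
      calc |ya (emb n a) i.val - ya (emb n b) i.val|
          = |(ya (emb n a) i.val - z.1 (0 + i.val)) - (ya (emb n b) i.val - z.1 (0 + i.val))| := by
            congr 1; ring
        _ ≤ |ya (emb n a) i.val - z.1 (0 + i.val)| + |ya (emb n b) i.val - z.1 (0 + i.val)| :=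
            abs_sub _ _
        _ < 1/12 + 1/12 := by exact add_lt_add ha hb
        _ = 1/6 := by norm_num
    linarith

lemma netMaxcard_ge (n : ℕ) : (2^n : ℕ∞) ≤ netMaxcard (shiftMap Fs) Set.univ U0 n := by
  have h := (dynnet n).card_le_netMaxcard
  have hcard : (Finset.image (fun a : Fin n → Bool => Y (emb n a)) Finset.univ).card = 2^n := by
    rw [Finset.card_image_of_injective _ (Y_inj n), Finset.card_univ]
    simp
  rw [hcard] at h
  exact_mod_cast h

lemma entropy_pos : 0 < Dynamics.coverEntropy (shiftMap Fs) Set.univ := by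
  have hle : netEntropyEntourage (shiftMap Fs) Set.univ U0 ≤
      Dynamics.coverEntropy (shiftMap Fs) Set.univ :=
    netEntropyEntourage_le_coverEntropy _ _ U0_mem
  have hlog2 : (0 : EReal) < ENNReal.log 2 := by
    rw [← ENNReal.log_one]
    exact ENNReal.log_lt_log_iff.2 (by norm_num : (1:ℝ≥0∞) < 2)
  refine lt_of_lt_of_le (lt_of_lt_of_le hlog2 ?_) hle
  rw [netEntropyEntourage]
  apply Filter.le_limsup_of_frequently_le ?_ (Filter.isBoundedUnder_of ⟨⊤, fun n => le_top⟩)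
  apply Filter.Eventually.frequently
  rw [Filter.eventually_atTop]
  refine ⟨1, fun m hm => ?_⟩
  have h2 : ((2:ℝ≥0∞))^m ≤ ((netMaxcard (shiftMap Fs) Set.univ U0 m : ℕ∞) : ℝ≥0∞) := by
    have := ENat.toENNReal_le.2 (netMaxcard_ge m)
    rw [ENat.toENNReal_pow] at this
    exact_mod_cast this
  have h3 : (m : EReal) * ENNReal.log 2 ≤ ENNReal.log (netMaxcard (shiftMap Fs) Set.univ U0 m) := by
    rw [← ENNReal.log_pow]
    exact ENNReal.log_monotone h2
  rw [EReal.le_div_iff_mul_le (by exact_mod_cast Nat.cast_pos'.2 hm) (by exact EReal.natCast_ne_top m)]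
  rw [mul_comm]
  exact h3

end Entropy

end

end S11

/-- There is a closed subset `F` of `[0,1] × [0,1]` with
`π₁(F) = π₂(F) = [0,1]`, such that the shift map `σ_F^+ : X_F^+ → X_F^+` has strictly
positive topological entropy, yet `F` is neither CR-turbulent nor reverse CR-turbulent. -/
theorem stmt11 :
    ∃ F : Set (ℝ × ℝ), IsClosed F ∧ F ⊆ Set.Icc (0:ℝ) 1 ×ˢ Set.Icc (0:ℝ) 1 ∧
      Prod.fst '' F = Set.Icc (0:ℝ) 1 ∧ Prod.snd '' F = Set.Icc (0:ℝ) 1 ∧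
      0 < Dynamics.coverEntropy (shiftMap F) Set.univ ∧
      ¬ CRTurbulent F ∧ ¬ RevCRTurbulent F := by
  exact ⟨S11.Fs, S11.Fs_closed, S11.Fs_sub, S11.Fs_proj1, S11.Fs_proj2, S11.entropy_pos,
    S11.Fs_not_CR, S11.Fs_not_Rev⟩
end

section
/- Let f, g, α be as in the standing assumptions. Then for every β with 0 < β ≤ α and every n ∈ ℕ, the n-th iterated image of the interval [β,1] under the set-valued map f ∪ g equals [g^n(β), 1]; in particular (f ∪ g)^n([α,1]) = [g^n(α), 1]. -/
/-! Both maps are increasing, so for `0 < γ ≤ α` the image of `[γ, 1]` is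
`f [γ, a] ∪ g [γ, 1] = [f γ, 1] ∪ [g γ, b]`, and the two pieces overlap because
`g γ < γ < f γ ≤ f α = b`. As `g x < x`, the orbit `gⁿ β` never leaves `(0, α]`. -/

open Set

open Function

theorem image_Icc_inter_union_image_Icc {f g : ℝ → ℝ} {a b β : ℝ}
    (hβ : 0 ≤ β) (hβa : β ≤ a) (ha : a ≤ 1) (hb : b ≤ 1)
    (hfc : ContinuousOn f (Icc β a)) (hfm : MonotoneOn f (Icc β a)) (hfa : f a = 1)
    (hgc : ContinuousOn g (Icc β 1)) (hgm : MonotoneOn g (Icc β 1)) (hg1 : g 1 = b)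
    (hgf : g β ≤ f β) (hfb : f β ≤ b) :
    f '' (Icc β 1 ∩ Icc 0 a) ∪ g '' Icc β 1 = Icc (g β) 1 := by
  have hg1' : g β ≤ 1 := hgf.trans (hfb.trans hb)
  rw [Icc_inter_Icc, max_eq_left hβ, min_eq_right ha, hfc.image_Icc_of_monotoneOn hβa hfm,
    hgc.image_Icc_of_monotoneOn (hβa.trans ha) hgm, hfa, hg1, Icc_union_Icc' hg1' hfb,
    min_eq_right hgf, max_eq_left hb]

theorem mapsTo_Ioc_of_lt_self {g : ℝ → ℝ} {c : ℝ} (hc : c ≤ 1)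
    (hgm : StrictMonoOn g (Icc 0 1)) (hg0 : g 0 = 0) (hglt : ∀ x, 0 < x → x ≤ 1 → g x < x) :
    MapsTo g (Ioc 0 c) (Ioc 0 c) := by
  intro x ⟨hx0, hxc⟩
  have hx1 : x ≤ 1 := hxc.trans hc
  refine ⟨?_, (hglt x hx0 hx1).le.trans hxc⟩
  simpa [hg0] using hgm (left_mem_Icc.2 zero_le_one) ⟨hx0.le, hx1⟩ hx0

theorem stmt12_general (a b : ℝ) (f g : ℝ → ℝ) (ha0 : 0 < a) (ha1 : a < 1)
    (hfc : ContinuousOn f (Set.Icc 0 a)) (hfi : Set.InjOn f (Set.Icc 0 a))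
    (hf0 : f 0 = 0) (hfa : f a = 1) (hfgt : ∀ x, 0 < x → x ≤ a → x < f x)
    (hb0 : 0 < b) (hb1 : b < 1)
    (hgc : ContinuousOn g (Set.Icc 0 1)) (hgi : Set.InjOn g (Set.Icc 0 1))
    (hg0 : g 0 = 0) (hg1 : g 1 = b) (hglt : ∀ x, 0 < x → x ≤ 1 → g x < x)
    (α : ℝ) (hα : α ∈ Set.Icc 0 a) (hfα : f α = g 1) :
    ∀ β, 0 < β → β ≤ α → ∀ n : ℕ,
      (fun S : Set ℝ => f '' (S ∩ Set.Icc 0 a) ∪ g '' S)^[n] (Set.Icc β 1) =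
        Set.Icc (g^[n] β) 1 := by
  have hfm : StrictMonoOn f (Icc 0 a) :=
    hfc.strictMonoOn_of_injOn_Icc ha0.le (by rw [hf0, hfa]; exact zero_le_one) hfi
  have hgm : StrictMonoOn g (Icc 0 1) :=
    hgc.strictMonoOn_of_injOn_Icc zero_le_one (by rw [hg0, hg1]; exact hb0.le) hgi
  have hαa : α ≤ a := hα.2
  have horbit := mapsTo_Ioc_of_lt_self (hαa.trans ha1.le) hgm hg0 hglt
  intro β hβ0 hβα n
  induction n with
  | zero => rfl
  | succ n ih =>
    obtain ⟨hγ0, hγα⟩ := horbit.iterate n ⟨hβ0, hβα⟩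
    set γ := g^[n] β
    have hγa : γ ≤ a := hγα.trans hαa
    have hγ1 : γ ≤ 1 := hγa.trans ha1.le
    have hIa : Icc γ a ⊆ Icc 0 a := Icc_subset_Icc hγ0.le le_rfl
    have hI1 : Icc γ 1 ⊆ Icc 0 1 := Icc_subset_Icc hγ0.le le_rfl
    have hfγ : f γ ≤ b := hg1 ▸ hfα ▸ hfm.monotoneOn ⟨hγ0.le, hγa⟩ hα hγα
    rw [iterate_succ_apply', iterate_succ_apply', ih]
    exact image_Icc_inter_union_image_Icc hγ0.le hγa ha1.le hb1.le
      (hfc.mono hIa) (hfm.monotoneOn.mono hIa) hfa (hgc.mono hI1) (hgm.monotoneOn.mono hI1) hg1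
      ((hglt γ hγ0 hγ1).trans (hfgt γ hγ0 hγa)).le hfγ

/-- With `f, g, α` as in the standing assumptions, for every `0 < β ≤ α`
and every `n`, the `n`-th iterated image of `[β,1]` under the set-valued map `f ∪ g`
(given by `S ↦ f(S ∩ [0,a]) ∪ g(S)`) equals `[gⁿ(β), 1]`; in particular
`(f ∪ g)ⁿ([α,1]) = [gⁿ(α), 1]`. -/
theorem stmt12 (a b : ℝ) (f g : ℝ → ℝ) (ha0 : 0 < a) (ha1 : a < 1)
    (hfc : ContinuousOn f (Set.Icc 0 a)) (hfi : Set.InjOn f (Set.Icc 0 a))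
    (hfm : Set.MapsTo f (Set.Icc 0 a) (Set.Icc 0 1))
    (hf0 : f 0 = 0) (hfa : f a = 1) (hfgt : ∀ x, 0 < x → x ≤ a → x < f x)
    (hb0 : 0 < b) (hb1 : b < 1)
    (hgc : ContinuousOn g (Set.Icc 0 1)) (hgi : Set.InjOn g (Set.Icc 0 1))
    (hgm : Set.MapsTo g (Set.Icc 0 1) (Set.Icc 0 1))
    (hg0 : g 0 = 0) (hg1 : g 1 = b) (hglt : ∀ x, 0 < x → x ≤ 1 → g x < x)
    (α : ℝ) (hα : α ∈ Set.Icc 0 a) (hfα : f α = g 1) :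
    ∀ β, 0 < β → β ≤ α → ∀ n : ℕ,
      (fun S : Set ℝ => f '' (S ∩ Set.Icc 0 a) ∪ g '' S)^[n] (Set.Icc β 1) =
        Set.Icc (g^[n] β) 1 :=
  stmt12_general a b f g ha0 ha1 hfc hfi hf0 hfa hfgt hb0 hb1 hgc hgi hg0 hg1 hglt α hα hfα
end

section
/- Let f, g, α be as in the standing assumptions. Then for every p ∈ (0,1) there exist z ∈ (0,p) and M ∈ ℕ such that (f ∪ g)^M([z,p]) = [g^M(z), 1] and [g^M(z), 1] ⊇ [α, 1]. -/
open Set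

/-!
For `0 < w ≤ z` and `p ≤ v ≤ 1`, with `z` so small that `f z ≤ g p`, the intervals
`g [w, v] = [g w, g v]` and `f [w, min v a] = [f w, f (min v a)]` overlap, so
`(f ∪ g) [w, v] = [g w, f (min v a)]` is again an interval of the same kind. Iterating, the lower
endpoint of `(f ∪ g)^k [z, p]` follows the `g`-orbit of `z` and the upper one the orbit of `p`
under `x ↦ f (min x a)`. As `f x - x` has a positive minimum on `[p, a]`, the upper endpoint
passes `a` after finitely many steps and becomes `f a = 1` one step later.
-/

open Function

/-- `(f ∪ g)(S)`, with `f` defined only on `[0, a]`. -/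
def unionImage (a : ℝ) (f g : ℝ → ℝ) (S : Set ℝ) : Set ℝ :=
  f '' (S ∩ Icc 0 a) ∪ g '' S

theorem exists_lt_iterate_of_lt_apply {φ : ℝ → ℝ} {p a : ℝ} (hφ : ContinuousOn φ (Icc p a))
    (hlt : ∀ x ∈ Icc p a, x < φ x) : ∃ n, a < φ^[n] p := by
  by_contra! hle
  obtain ⟨x₀, hx₀, hmin⟩ :=
    isCompact_Icc.exists_isMinOn (nonempty_Icc.2 (hle 0)) (hφ.sub continuousOn_id)
  set δ := φ x₀ - x₀
  have hδ : 0 < δ := sub_pos.2 (hlt x₀ hx₀)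
  have hgrow : ∀ n : ℕ, p + n * δ ≤ φ^[n] p := by
    intro n
    induction n with
    | zero => simp
    | succ n ih =>
      have hmem : φ^[n] p ∈ Icc p a := ⟨by nlinarith [n.cast_nonneg (α := ℝ)], hle n⟩
      have hgap : δ ≤ φ (φ^[n] p) - φ^[n] p := hmin hmem
      rw [iterate_succ_apply']
      push_cast
      linarith
  obtain ⟨n, hn⟩ := exists_nat_gt ((a - p) / δ)
  rw [div_lt_iff₀ hδ] at hn
  linarith [hgrow n, hle n]

theorem iterate_apply_Icc_eq {α : Type*} [Preorder α] {T : Set α → Set α} {G H : α → α}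
    {W V : Set α} (hG : MapsTo G W W) (hH : MapsTo H V V)
    (hT : ∀ w ∈ W, ∀ v ∈ V, T (Icc w v) = Icc (G w) (H v)) {w v : α} (hw : w ∈ W) (hv : v ∈ V)
    (k : ℕ) : T^[k] (Icc w v) = Icc (G^[k] w) (H^[k] v) := by
  induction k with
  | zero => rfl
  | succ k ih =>
    rw [iterate_succ_apply', ih, hT _ (hG.iterate k hw) _ (hH.iterate k hv),
      iterate_succ_apply', iterate_succ_apply']

theorem unionImage_Icc {a : ℝ} {f g : ℝ → ℝ} (hfc : ContinuousOn f (Icc 0 a))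
    (hfm : MonotoneOn f (Icc 0 a)) (hgc : ContinuousOn g (Icc 0 1)) (hgm : MonotoneOn g (Icc 0 1))
    {w v : ℝ} (hw : 0 ≤ w) (hwa : w ≤ a) (hwv : w ≤ v) (hv : v ≤ 1)
    (hgf : g w ≤ f w) (hfg : f w ≤ g v) (hgf' : g v ≤ f (min v a)) :
    unionImage a f g (Icc w v) = Icc (g w) (f (min v a)) := by
  have hsubf : Icc w (min v a) ⊆ Icc 0 a := Icc_subset_Icc hw (min_le_right _ _)
  have hsubg : Icc w v ⊆ Icc 0 1 := Icc_subset_Icc hw hv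
  have hinter : Icc w v ∩ Icc 0 a = Icc w (min v a) := by
    rw [Icc_inter_Icc, sup_eq_left.2 hw]
  rw [unionImage, hinter,
    (hfc.mono hsubf).image_Icc_of_monotoneOn (le_min hwv hwa) (hfm.mono hsubf),
    (hgc.mono hsubg).image_Icc_of_monotoneOn hwv (hgm.mono hsubg),
    Icc_union_Icc' (hgf.trans (hfg.trans hgf')) hfg, min_eq_right hgf, max_eq_left hgf']

section StandingAssumptions

variable {a : ℝ} {f g : ℝ → ℝ}

theorem self_le_apply_min (hfa : f a = 1) (hfgt : ∀ x, 0 < x → x ≤ a → x < f x) {x : ℝ}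
    (hx0 : 0 < x) (hx1 : x ≤ 1) : x ≤ f (min x a) := by
  rcases le_total x a with hxa | hax
  · rw [min_eq_left hxa]
    exact (hfgt x hx0 hxa).le
  · rwa [min_eq_right hax, hfa]

theorem mapsTo_Icc_apply_min (hfm : MonotoneOn f (Icc 0 a)) (hfa : f a = 1)
    (hfgt : ∀ x, 0 < x → x ≤ a → x < f x) {p : ℝ} (hp : 0 < p) :
    MapsTo (fun x => f (min x a)) (Icc p 1) (Icc p 1) := by
  intro x hx
  have hx0 : 0 < x := hp.trans_le hx.1
  refine ⟨hx.1.trans (self_le_apply_min hfa hfgt hx0 hx.2), ?_⟩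
  show f (min x a) ≤ 1
  rcases le_total x a with hxa | hax
  · rw [min_eq_left hxa, ← hfa]
    exact hfm ⟨hx0.le, hxa⟩ ⟨hx0.le.trans hxa, le_rfl⟩ hxa
  · rw [min_eq_right hax, hfa]

theorem exists_iterate_apply_min_eq_one (hfc : ContinuousOn f (Icc 0 a)) (hfa : f a = 1)
    (hfgt : ∀ x, 0 < x → x ≤ a → x < f x) {p : ℝ} (hp : 0 < p) :
    ∃ n, (fun x => f (min x a))^[n + 1] p = 1 := by
  have hcont : ContinuousOn (fun x => f (min x a)) (Icc p a) :=
    (hfc.mono (Icc_subset_Icc hp.le le_rfl)).congr fun x hx => by simp [min_eq_left hx.2]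
  obtain ⟨n, hn⟩ := exists_lt_iterate_of_lt_apply hcont fun x hx => by
    simpa [min_eq_left hx.2] using hfgt x (hp.trans_le hx.1) hx.2
  exact ⟨n, by rw [iterate_succ_apply', min_eq_right hn.le, hfa]⟩

theorem mapsTo_Ioc_zero (hgm : StrictMonoOn g (Icc 0 1)) (hg0 : g 0 = 0)
    (hglt : ∀ x, 0 < x → x ≤ 1 → g x < x) {z : ℝ} (hz : z ≤ 1) :
    MapsTo g (Ioc 0 z) (Ioc 0 z) := fun x hx =>
  ⟨hg0 ▸ hgm ⟨le_rfl, zero_le_one⟩ ⟨hx.1.le, hx.2.trans hz⟩ hx.1,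
    (hglt x hx.1 (hx.2.trans hz)).le.trans hx.2⟩

theorem exists_mem_Ioc_apply_eq (hfc : ContinuousOn f (Icc 0 a)) (ha : 0 ≤ a) (hf0 : f 0 = 0)
    (hfa : f a = 1) {y : ℝ} (hy : y ∈ Ioc 0 1) : ∃ c ∈ Ioc 0 a, f c = y := by
  obtain ⟨c, hc, hcy⟩ :=
    intermediate_value_Icc ha hfc (by rw [hf0, hfa]; exact Ioc_subset_Icc_self hy)
  exact ⟨c, ⟨hc.1.lt_of_ne (by rintro rfl; rw [hf0] at hcy; exact hy.1.ne hcy), hc.2⟩, hcy⟩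

theorem unionImage_Icc_of_apply_le (hfc : ContinuousOn f (Icc 0 a)) (hfm : MonotoneOn f (Icc 0 a))
    (hfa : f a = 1) (hfgt : ∀ x, 0 < x → x ≤ a → x < f x) (hgc : ContinuousOn g (Icc 0 1))
    (hgm : MonotoneOn g (Icc 0 1)) (hglt : ∀ x, 0 < x → x ≤ 1 → g x < x) {w v : ℝ} (hw : 0 < w)
    (hwa : w ≤ a) (hwv : w ≤ v) (hv : v ≤ 1) (hfg : f w ≤ g v) :
    unionImage a f g (Icc w v) = Icc (g w) (f (min v a)) := by
  have hv0 : 0 < v := hw.trans_le hwv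
  exact unionImage_Icc hfc hfm hgc hgm hw.le hwa hwv hv
    ((hglt w hw (hwv.trans hv)).le.trans (hfgt w hw hwa).le) hfg
    ((hglt v hv0 hv).le.trans (self_le_apply_min hfa hfgt hv0 hv))

end StandingAssumptions

theorem stmt13_general (a b : ℝ) (f g : ℝ → ℝ) (ha0 : 0 < a)
    (hfc : ContinuousOn f (Set.Icc 0 a)) (hfi : Set.InjOn f (Set.Icc 0 a))
    (hf0 : f 0 = 0) (hfa : f a = 1) (hfgt : ∀ x, 0 < x → x ≤ a → x < f x)
    (hb0 : 0 < b)
    (hgc : ContinuousOn g (Set.Icc 0 1)) (hgi : Set.InjOn g (Set.Icc 0 1))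
    (hg0 : g 0 = 0) (hg1 : g 1 = b) (hglt : ∀ x, 0 < x → x ≤ 1 → g x < x)
    (α : ℝ) (hα : α ∈ Set.Icc 0 a) (hfα : f α = g 1) :
    ∀ p, 0 < p → p < 1 → ∃ z M, 0 < z ∧ z < p ∧ 0 < M ∧
      (fun S : Set ℝ => f '' (S ∩ Set.Icc 0 a) ∪ g '' S)^[M] (Set.Icc z p) =
        Set.Icc (g^[M] z) 1 ∧
      Set.Icc α 1 ⊆ Set.Icc (g^[M] z) 1 := by
  intro p hp0 hp1
  have hfm : MonotoneOn f (Icc 0 a) :=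
    (hfc.strictMonoOn_of_injOn_Icc ha0.le (by rw [hf0, hfa]; exact zero_le_one) hfi).monotoneOn
  have hgm : StrictMonoOn g (Icc 0 1) :=
    hgc.strictMonoOn_of_injOn_Icc zero_le_one (by rw [hg0, hg1]; exact hb0.le) hgi
  have hα0 : 0 < α := hα.1.lt_of_ne (by rintro rfl; rw [hf0, hg1] at hfα; exact hb0.ne hfα)
  have hgp : g p ∈ Ioc 0 p := mapsTo_Ioc_zero hgm hg0 hglt hp1.le ⟨hp0, le_rfl⟩
  obtain ⟨c, hc, hfcp⟩ :=
    exists_mem_Ioc_apply_eq hfc ha0.le hf0 hfa ⟨hgp.1, hgp.2.trans hp1.le⟩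
  set z := min (min c α) (p / 2)
  have hz : z ∈ Ioc 0 z := ⟨lt_min (lt_min hc.1 hα0) (half_pos hp0), le_rfl⟩
  have hzp : z < p := (min_le_right _ _).trans_lt (half_lt_self hp0)
  have hzc : z ≤ c := (min_le_left _ _).trans (min_le_left _ _)
  have hzα : z ≤ α := (min_le_left _ _).trans (min_le_right _ _)
  have hT : ∀ w ∈ Ioc 0 z, ∀ v ∈ Icc p 1,
      unionImage a f g (Icc w v) = Icc (g w) (f (min v a)) := by
    intro w hw v hv
    have hwc : w ≤ c := hw.2.trans hzc
    refine unionImage_Icc_of_apply_le hfc hfm hfa hfgt hgc hgm.monotoneOn hglt hw.1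
      (hwc.trans hc.2) (hw.2.trans (hzp.le.trans hv.1)) hv.2 ?_
    calc f w ≤ f c := hfm ⟨hw.1.le, hwc.trans hc.2⟩ (Ioc_subset_Icc_self hc) hwc
      _ = g p := hfcp
      _ ≤ g v := hgm.monotoneOn ⟨hp0.le, hp1.le⟩ ⟨(hp0.trans_le hv.1).le, hv.2⟩ hv.1
  obtain ⟨n, hn⟩ := exists_iterate_apply_min_eq_one hfc hfa hfgt hp0
  have hgz := mapsTo_Ioc_zero hgm hg0 hglt (hzp.trans hp1).le
  refine ⟨z, n + 1, hz.1, hzp, n.succ_pos, ?_, Icc_subset_Icc_left ((hgz.iterate _ hz).2.trans hzα)⟩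
  rw [← hn]
  exact iterate_apply_Icc_eq hgz (mapsTo_Icc_apply_min hfm hfa hfgt hp0) hT hz ⟨le_rfl, hp1.le⟩ _

/-- With `f, g, α` as in the standing assumptions, for every `p ∈ (0,1)`
there are `z ∈ (0,p)` and `M ∈ ℕ` (positive) with
`(f ∪ g)^M([z,p]) = [g^M(z), 1] ⊇ [α,1]`. -/
theorem stmt13 (a b : ℝ) (f g : ℝ → ℝ) (ha0 : 0 < a) (ha1 : a < 1)
    (hfc : ContinuousOn f (Set.Icc 0 a)) (hfi : Set.InjOn f (Set.Icc 0 a))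
    (hfm : Set.MapsTo f (Set.Icc 0 a) (Set.Icc 0 1))
    (hf0 : f 0 = 0) (hfa : f a = 1) (hfgt : ∀ x, 0 < x → x ≤ a → x < f x)
    (hb0 : 0 < b) (hb1 : b < 1)
    (hgc : ContinuousOn g (Set.Icc 0 1)) (hgi : Set.InjOn g (Set.Icc 0 1))
    (hgm : Set.MapsTo g (Set.Icc 0 1) (Set.Icc 0 1))
    (hg0 : g 0 = 0) (hg1 : g 1 = b) (hglt : ∀ x, 0 < x → x ≤ 1 → g x < x)
    (α : ℝ) (hα : α ∈ Set.Icc 0 a) (hfα : f α = g 1) :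
    ∀ p, 0 < p → p < 1 → ∃ z M, 0 < z ∧ z < p ∧ 0 < M ∧
      (fun S : Set ℝ => f '' (S ∩ Set.Icc 0 a) ∪ g '' S)^[M] (Set.Icc z p) =
        Set.Icc (g^[M] z) 1 ∧
      Set.Icc α 1 ⊆ Set.Icc (g^[M] z) 1 :=
  stmt13_general a b f g ha0 hfc hfi hf0 hfa hfgt hb0 hgc hgi hg0 hg1 hglt α hα hfα
end
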